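/- arXiv:1402.1881 — 7 statements merged into one kernel-verified Lean document; each statement's English description precedes it below -/
import Mathlib

section
/- Let x be an optimal feasible solution satisfying condition (⋆). Suppose that every job j ∈ 𝒥_f(x) has the same immediate successor (possibly the dummy successor) in every fractional schedule of x containing j. Then there exists an optimal feasible solution x* satisfying condition (⋆) such that every job j ∈ 𝒥_f(x*) has both the same immediate predecessor and the same immediate successor in every fractional schedule of x* containing j. -/
/-
Successor coherence makes all fractional schedules through a job `j` agree from `j` on.
Fix for every job a canonical predecessor (the latest one occurring in a fractional schedule)
and cut every fractional schedule just before the first job whose predecessor in it is not the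
canonical one. Two such prefixes sharing a job `j` come from the same schedule: they agree
before `j` by canonicity and from `j` on by coherence. Following canonical predecessors back
from `j` to a job without one, condition (⋆) shows that the fractional columns whose prefix
contains `j` still carry weight at least `1`. Moving every fractional column onto its prefix
therefore gives a feasible solution of no larger cost that satisfies (⋆), and in it two
fractional schedules sharing a job are equal.
-/

open scoped Classical BigOperators

/-- A finset of jobs is pairwise compatible. -/
def Compatible {n : ℕ} (r d : Fin n → ℝ) (L : ℝ) (s : Finset (Fin n)) : Prop :=
  ∀ j ∈ s, ∀ k ∈ s, j < k → d j ≤ r k ∧ d k - r j ≤ L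

/-- A schedule for machine class `i`. -/
def IsSchedule {n c : ℕ} (r d : Fin n → ℝ) (L : ℝ) (𝒥 : Fin c → Set (Fin n))
    (i : Fin c) (s : Finset (Fin n)) : Prop :=
  s.Nonempty ∧ Compatible r d L s ∧ ∀ j ∈ s, j ∈ 𝒥 i

/-- A feasible (fractional covering) solution. -/
def Feasible {n c : ℕ} (r d : Fin n → ℝ) (L : ℝ) (𝒥 : Fin c → Set (Fin n))
    (x : Fin c × Finset (Fin n) → ℝ) : Prop :=
  (∀ p, 0 ≤ x p) ∧
  (∀ p, 0 < x p → IsSchedule r d L 𝒥 p.1 p.2) ∧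
  (∀ j : Fin n, 1 ≤ ∑ p : Fin c × Finset (Fin n), if j ∈ p.2 then x p else 0)

/-- The cost of a solution. -/
def cost {n c : ℕ} (w : Fin c → ℝ) (x : Fin c × Finset (Fin n) → ℝ) : ℝ :=
  ∑ p : Fin c × Finset (Fin n), w p.1 * x p

/-- Optimality. -/
def Optimal {n c : ℕ} (r d : Fin n → ℝ) (L : ℝ) (𝒥 : Fin c → Set (Fin n)) (w : Fin c → ℝ)
    (x : Fin c × Finset (Fin n) → ℝ) : Prop :=
  Feasible r d L 𝒥 x ∧ ∀ y, Feasible r d L 𝒥 y → cost w x ≤ cost w y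

/-- A column is fractional. -/
def FracCol {n c : ℕ} (x : Fin c × Finset (Fin n) → ℝ) (p : Fin c × Finset (Fin n)) : Prop :=
  0 < x p ∧ x p < 1

/-- A fractional schedule of `x`. -/
def FracSched {n c : ℕ} (x : Fin c × Finset (Fin n) → ℝ) (s : Finset (Fin n)) : Prop :=
  ∃ i, FracCol x (i, s)

/-- The set of jobs belonging to some fractional schedule. -/
def Jf {n c : ℕ} (x : Fin c × Finset (Fin n) → ℝ) : Set (Fin n) :=
  {j | ∃ s, FracSched x s ∧ j ∈ s}

/-- Immediate successor of `j` in `s` (`⊤` = dummy successor). -/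
def succIn {n : ℕ} (s : Finset (Fin n)) (j : Fin n) : WithTop (Fin n) :=
  (s.filter (fun k => j < k)).min

/-- Immediate predecessor of `j` in `s` (`⊥` = dummy predecessor). -/
def predIn {n : ℕ} (s : Finset (Fin n)) (j : Fin n) : WithBot (Fin n) :=
  (s.filter (fun k => k < j)).max

/-- Condition (⋆). -/
def StarCond {n c : ℕ} (x : Fin c × Finset (Fin n) → ℝ) : Prop :=
  ∀ j ∈ Jf x, 1 ≤ ∑ p : Fin c × Finset (Fin n),
    if FracCol x p ∧ j ∈ p.2 then x p else 0

/-- Integral solution. -/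
def Integral {n c : ℕ} (x : Fin c × Finset (Fin n) → ℝ) : Prop :=
  ∀ p, x p = 0 ∨ x p = 1

namespace FixedJobScheduling

section Neighbours

variable {n : ℕ} {s : Finset (Fin n)} {j k : Fin n}

lemma succIn_eq_top_iff : succIn s j = ⊤ ↔ ∀ t ∈ s, ¬ j < t := by
  rw [succIn, Finset.min_eq_top, Finset.filter_eq_empty_iff]

lemma predIn_eq_bot_iff : predIn s j = ⊥ ↔ ∀ t ∈ s, ¬ t < j := by
  rw [predIn, Finset.max_eq_bot, Finset.filter_eq_empty_iff]

lemma succIn_eq_coe_iff :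
    succIn s j = k ↔ k ∈ s ∧ j < k ∧ ∀ t ∈ s, j < t → k ≤ t := by
  constructor
  · intro h
    obtain ⟨hk, hjk⟩ := Finset.mem_filter.1 (Finset.mem_of_min h)
    refine ⟨hk, hjk, fun t ht hjt => ?_⟩
    have := Finset.min_le (Finset.mem_filter.2 ⟨ht, hjt⟩)
    rw [succIn] at h
    rw [h] at this
    exact_mod_cast this
  · rintro ⟨hk, hjk, hmin⟩
    refine le_antisymm (Finset.min_le (Finset.mem_filter.2 ⟨hk, hjk⟩))
      (Finset.le_min fun t ht => ?_)
    obtain ⟨ht, hjt⟩ := Finset.mem_filter.1 ht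
    exact_mod_cast hmin t ht hjt

lemma predIn_eq_coe_iff :
    predIn s j = k ↔ k ∈ s ∧ k < j ∧ ∀ t ∈ s, t < j → t ≤ k := by
  constructor
  · intro h
    obtain ⟨hk, hkj⟩ := Finset.mem_filter.1 (Finset.mem_of_max h)
    refine ⟨hk, hkj, fun t ht htj => ?_⟩
    have := Finset.le_max (s := s.filter (· < j)) (Finset.mem_filter.2 ⟨ht, htj⟩)
    rw [predIn] at h
    rw [h] at this
    exact_mod_cast this
  · rintro ⟨hk, hkj, hmax⟩
    refine le_antisymm (Finset.max_le fun t ht => ?_)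
      (Finset.le_max (Finset.mem_filter.2 ⟨hk, hkj⟩))
    obtain ⟨ht, htj⟩ := Finset.mem_filter.1 ht
    exact_mod_cast hmax t ht htj

lemma succIn_eq_coe_iff_predIn_eq_coe (hj : j ∈ s) (hk : k ∈ s) :
    succIn s k = j ↔ predIn s j = k := by
  rw [succIn_eq_coe_iff, predIn_eq_coe_iff]
  constructor
  · rintro ⟨-, hkj, hmin⟩
    exact ⟨hk, hkj, fun t ht htj => not_lt.1 fun hkt => (hmin t ht hkt).not_gt htj⟩
  · rintro ⟨-, hkj, hmax⟩
    exact ⟨hj, hkj, fun t ht hkt => not_lt.1 fun htj => (hmax t ht htj).not_gt hkt⟩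

lemma filter_le_eq_singleton_of_succIn_eq_top (hj : j ∈ s) (h : succIn s j = ⊤) :
    s.filter (j ≤ ·) = {j} := by
  ext t
  simp only [Finset.mem_filter, Finset.mem_singleton]
  refine ⟨fun ⟨ht, hjt⟩ => ?_, by rintro rfl; exact ⟨hj, le_rfl⟩⟩
  exact (hjt.lt_or_eq.resolve_left (succIn_eq_top_iff.1 h t ht)).symm

lemma filter_le_eq_insert_of_succIn_eq_coe (hj : j ∈ s) (h : succIn s j = k) :
    s.filter (j ≤ ·) = insert j (s.filter (k ≤ ·)) := by
  obtain ⟨-, hjk, hmin⟩ := succIn_eq_coe_iff.1 h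
  ext t
  simp only [Finset.mem_filter, Finset.mem_insert]
  constructor
  · rintro ⟨ht, hjt⟩
    rcases hjt.lt_or_eq with hjt | rfl
    exacts [Or.inr ⟨ht, hmin t ht hjt⟩, Or.inl rfl]
  · rintro (rfl | ⟨ht, hkt⟩)
    exacts [⟨hj, le_rfl⟩, ⟨ht, hjk.le.trans hkt⟩]

lemma filter_lt_eq_empty_of_predIn_eq_bot (h : predIn s j = ⊥) : s.filter (· < j) = ∅ :=
  Finset.max_eq_bot.1 h

lemma filter_lt_eq_insert_of_predIn_eq_coe (h : predIn s j = k) :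
    s.filter (· < j) = insert k (s.filter (· < k)) := by
  obtain ⟨hk, hkj, hmax⟩ := predIn_eq_coe_iff.1 h
  ext t
  simp only [Finset.mem_filter, Finset.mem_insert]
  constructor
  · rintro ⟨ht, htj⟩
    rcases (hmax t ht htj).lt_or_eq with htk | rfl
    exacts [Or.inr ⟨ht, htk⟩, Or.inl rfl]
  · rintro (rfl | ⟨ht, htk⟩)
    exacts [⟨hk, hkj⟩, ⟨ht, htk.trans hkj⟩]

end Neighbours

section CanonicalPrefix

variable {n : ℕ} {P : Finset (Fin n) → Prop} {s s' : Finset (Fin n)} {j k : Fin n}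

def SuccCoherent (P : Finset (Fin n) → Prop) : Prop :=
  ∀ j s s', P s → P s' → j ∈ s → j ∈ s' → succIn s j = succIn s' j

lemma SuccCoherent.filter_le_eq (hP : SuccCoherent P) (hs : P s) (hs' : P s') (hj : j ∈ s)
    (hj' : j ∈ s') : s.filter (j ≤ ·) = s'.filter (j ≤ ·) := by
  induction j using WellFoundedGT.induction with
  | _ j ih =>
    have hsucc := hP j s s' hs hs' hj hj'
    cases h : succIn s j with
    | top =>
      rw [filter_le_eq_singleton_of_succIn_eq_top hj h,
        filter_le_eq_singleton_of_succIn_eq_top hj' (hsucc ▸ h)]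
    | coe k =>
      have h' : succIn s' j = k := hsucc ▸ h
      obtain ⟨hk, hjk, -⟩ := succIn_eq_coe_iff.1 h
      rw [filter_le_eq_insert_of_succIn_eq_coe hj h, filter_le_eq_insert_of_succIn_eq_coe hj' h',
        ih k hjk hk (succIn_eq_coe_iff.1 h').1]

noncomputable def latestPred (P : Finset (Fin n) → Prop) (j : Fin n) : WithBot (Fin n) :=
  (Finset.univ.filter fun s => P s ∧ j ∈ s).sup fun s => predIn s j

lemma predIn_le_latestPred (hs : P s) (hj : j ∈ s) : predIn s j ≤ latestPred P j :=
  Finset.le_sup (f := fun s => predIn s j) (Finset.mem_filter.2 ⟨Finset.mem_univ _, hs, hj⟩)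

lemma exists_predIn_eq_latestPred (h : latestPred P j ≠ ⊥) :
    ∃ s, P s ∧ j ∈ s ∧ predIn s j = latestPred P j := by
  have hne : (Finset.univ.filter fun s => P s ∧ j ∈ s).Nonempty := by
    by_contra hne
    rw [Finset.not_nonempty_iff_eq_empty] at hne
    exact h (by rw [latestPred, hne, Finset.sup_empty])
  obtain ⟨s, hs, he⟩ := Finset.exists_mem_eq_sup _ hne fun s => predIn s j
  exact ⟨s, (Finset.mem_filter.1 hs).2.1, (Finset.mem_filter.1 hs).2.2, he.symm⟩

def PredCanonicalUpTo (P : Finset (Fin n) → Prop) (s : Finset (Fin n)) (j : Fin n) : Prop :=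
  ∀ u ∈ s, u ≤ j → predIn s u = latestPred P u

lemma PredCanonicalUpTo.mono (h : PredCanonicalUpTo P s j) (hkj : k ≤ j) :
    PredCanonicalUpTo P s k :=
  fun u hu huk => h u hu (huk.trans hkj)

lemma predCanonicalUpTo_of_predIn_eq_bot (h : predIn s j = ⊥) (hl : latestPred P j = ⊥) :
    PredCanonicalUpTo P s j := by
  intro u hu huj
  rcases huj.lt_or_eq with huj | rfl
  · exact absurd huj (predIn_eq_bot_iff.1 h u hu)
  · rw [h, hl]

lemma predCanonicalUpTo_iff_of_predIn_eq_coe (hj : j ∈ s) (h : predIn s j = k) :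
    PredCanonicalUpTo P s j ↔ latestPred P j = k ∧ PredCanonicalUpTo P s k := by
  obtain ⟨-, hkj, hmax⟩ := predIn_eq_coe_iff.1 h
  constructor
  · intro hc
    exact ⟨h ▸ (hc j hj le_rfl).symm, hc.mono hkj.le⟩
  · rintro ⟨hl, hc⟩ u hu huj
    rcases huj.lt_or_eq with huj | rfl
    · exact hc u hu (hmax u hu huj)
    · rw [h, hl]

lemma PredCanonicalUpTo.filter_lt_eq (hc : PredCanonicalUpTo P s j)
    (hc' : PredCanonicalUpTo P s' j) (hj : j ∈ s) (hj' : j ∈ s') :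
    s.filter (· < j) = s'.filter (· < j) := by
  induction j using WellFoundedLT.induction with
  | _ j ih =>
    have hp := hc j hj le_rfl
    have hp' := hc' j hj' le_rfl
    cases h : latestPred P j with
    | bot =>
      rw [filter_lt_eq_empty_of_predIn_eq_bot (hp.trans h),
        filter_lt_eq_empty_of_predIn_eq_bot (hp'.trans h)]
    | coe k =>
      obtain ⟨hk, hkj, -⟩ := predIn_eq_coe_iff.1 (hp.trans h)
      rw [filter_lt_eq_insert_of_predIn_eq_coe (hp.trans h),
        filter_lt_eq_insert_of_predIn_eq_coe (hp'.trans h),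
        ih k hkj (hc.mono hkj.le) (hc'.mono hkj.le) hk (predIn_eq_coe_iff.1 (hp'.trans h)).1]

lemma SuccCoherent.eq_of_predCanonicalUpTo (hP : SuccCoherent P) (hs : P s) (hs' : P s')
    (hj : j ∈ s) (hj' : j ∈ s') (hc : PredCanonicalUpTo P s j)
    (hc' : PredCanonicalUpTo P s' j) : s = s' := by
  have hpre := Finset.ext_iff.1 (hc.filter_lt_eq hc' hj hj')
  have htail := Finset.ext_iff.1 (hP.filter_le_eq hs hs' hj hj')
  ext t
  rcases lt_or_ge t j with htj | hjt
  · simpa [htj] using hpre t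
  · simpa [hjt] using htail t

noncomputable def canonicalPrefix (P : Finset (Fin n) → Prop) (s : Finset (Fin n)) :
    Finset (Fin n) :=
  s.filter (PredCanonicalUpTo P s)

lemma mem_canonicalPrefix : j ∈ canonicalPrefix P s ↔ j ∈ s ∧ PredCanonicalUpTo P s j :=
  Finset.mem_filter

lemma canonicalPrefix_subset : canonicalPrefix P s ⊆ s :=
  Finset.filter_subset _ _

lemma SuccCoherent.eq_of_mem_canonicalPrefix (hP : SuccCoherent P) (hs : P s) (hs' : P s')
    (hj : j ∈ canonicalPrefix P s) (hj' : j ∈ canonicalPrefix P s') : s = s' := by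
  rw [mem_canonicalPrefix] at hj hj'
  exact hP.eq_of_predCanonicalUpTo hs hs' hj.1 hj'.1 hj.2 hj'.2

end CanonicalPrefix

section Pushforward

variable {α β : Type*} [Fintype α] (f : α → β) (y : α → ℝ)

noncomputable def pushforward (b : β) : ℝ :=
  ∑ a with f a = b, y a

lemma pushforward_nonneg (hy : ∀ a, 0 ≤ y a) (b : β) : 0 ≤ pushforward f y b :=
  Finset.sum_nonneg fun a _ => hy a

lemma sum_mul_pushforward [Fintype β] (g : β → ℝ) :
    ∑ b, g b * pushforward f y b = ∑ a, g (f a) * y a := by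
  simp only [pushforward, Finset.mul_sum]
  rw [← Finset.sum_fiberwise Finset.univ f fun a => g (f a) * y a]
  refine Finset.sum_congr rfl fun b _ => Finset.sum_congr rfl fun a ha => ?_
  rw [(Finset.mem_filter.1 ha).2]

variable {f y} {b : β}

lemma pushforward_eq_of_unique {a : α} (ha : f a = b)
    (h : ∀ a', f a' = b → a' ≠ a → y a' = 0) :
    pushforward f y b = y a :=
  Finset.sum_eq_single_of_mem a (Finset.mem_filter.2 ⟨Finset.mem_univ a, ha⟩)
    fun a' ha' hne => h a' (Finset.mem_filter.1 ha').2 hne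

lemma pushforward_eq_zero (h : ∀ a, f a = b → y a = 0) : pushforward f y b = 0 :=
  Finset.sum_eq_zero fun a ha => h a (Finset.mem_filter.1 ha).2

lemma exists_of_pushforward_ne_zero (h : pushforward f y b ≠ 0) :
    ∃ a, f a = b ∧ y a ≠ 0 := by
  by_contra! h'
  exact h (pushforward_eq_zero h')

end Pushforward

lemma sum_apply_mk_le_sum {α β : Type*} [Fintype α] [Fintype β] {f : α × β → ℝ}
    (hf : ∀ p, 0 ≤ f p) (b : β) : ∑ a, f (a, b) ≤ ∑ p, f p := by
  rw [Fintype.sum_prod_type]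
  exact Finset.sum_le_sum fun a _ => Finset.single_le_sum (fun b _ => hf (a, b)) (Finset.mem_univ b)

section PrefixSolution

variable {n c : ℕ} {r d : Fin n → ℝ} {L : ℝ} {𝒥 : Fin c → Set (Fin n)}
  {x : Fin c × Finset (Fin n) → ℝ} {S T : Finset (Fin n)} {i : Fin c} {j : Fin n}
  {p q : Fin c × Finset (Fin n)}

lemma IsSchedule.mono (h : IsSchedule r d L 𝒥 i S) (hTS : T ⊆ S) (hT : T.Nonempty) :
    IsSchedule r d L 𝒥 i T :=
  ⟨hT, fun a ha b hb => h.2.1 a (hTS ha) b (hTS hb), fun a ha => h.2.2 a (hTS ha)⟩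

lemma one_le_sum_predCanonicalUpTo (hP : SuccCoherent (FracSched x)) (hstar : StarCond x)
    (hj : j ∈ Jf x) :
    1 ≤ ∑ p : Fin c × Finset (Fin n),
      if FracCol x p ∧ j ∈ p.2 ∧ PredCanonicalUpTo (FracSched x) p.2 j then x p else 0 := by
  induction j using WellFoundedLT.induction with
  | _ j ih =>
    cases hl : latestPred (FracSched x) j with
    | bot =>
      refine (hstar j hj).trans_eq (Finset.sum_congr rfl fun p _ => if_congr ?_ rfl rfl)
      refine ⟨fun ⟨hp, hjp⟩ => ⟨hp, hjp, predCanonicalUpTo_of_predIn_eq_bot ?_ hl⟩,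
        fun h => ⟨h.1, h.2.1⟩⟩
      exact le_bot_iff.1 (hl ▸ predIn_le_latestPred ⟨p.1, hp⟩ hjp)
    | coe k =>
      obtain ⟨s₀, hs₀, hj₀, hpred₀⟩ :=
        exists_predIn_eq_latestPred (P := FracSched x) (hl ▸ WithBot.coe_ne_bot)
      rw [hl] at hpred₀
      obtain ⟨hk₀, hkj, -⟩ := predIn_eq_coe_iff.1 hpred₀
      have hsucc₀ : succIn s₀ k = j := (succIn_eq_coe_iff_predIn_eq_coe hj₀ hk₀).2 hpred₀
      -- by coherence with `s₀`, a fractional schedule through `k` continues with `j`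
      refine (ih k hkj ⟨s₀, hs₀, hk₀⟩).trans_eq
        (Finset.sum_congr rfl fun p _ => if_congr ?_ rfl rfl)
      refine ⟨fun ⟨hp, hkp, hc⟩ => ⟨hp, ?_⟩, fun ⟨hp, hjp, hc⟩ => ⟨hp, ?_⟩⟩
      · have hsucc : succIn p.2 k = j :=
          (hP k p.2 s₀ ⟨p.1, hp⟩ hs₀ hkp hk₀).trans hsucc₀
        have hjp := (succIn_eq_coe_iff.1 hsucc).1
        have hpred := (succIn_eq_coe_iff_predIn_eq_coe hjp hkp).1 hsucc
        exact ⟨hjp, (predCanonicalUpTo_iff_of_predIn_eq_coe hjp hpred).2 ⟨hl, hc⟩⟩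
      · have hpred : predIn p.2 j = k := (hc j hjp le_rfl).trans hl
        exact ⟨(predIn_eq_coe_iff.1 hpred).1,
          ((predCanonicalUpTo_iff_of_predIn_eq_coe hjp hpred).1 hc).2⟩

lemma exists_mem_canonicalPrefix (hP : SuccCoherent (FracSched x)) (hstar : StarCond x)
    (hj : j ∈ Jf x) : ∃ S, FracSched x S ∧ j ∈ canonicalPrefix (FracSched x) S := by
  have hsum := one_le_sum_predCanonicalUpTo hP hstar hj
  obtain ⟨p, -, hp⟩ := Finset.exists_ne_zero_of_sum_ne_zero (by linarith : _ ≠ (0 : ℝ))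
  obtain ⟨hfrac, hjp, hc⟩ := (ite_ne_right_iff.1 hp).1
  exact ⟨p.2, ⟨p.1, hfrac⟩, mem_canonicalPrefix.2 ⟨hjp, hc⟩⟩

def HasHeavyColumn (x : Fin c × Finset (Fin n) → ℝ) (t : Finset (Fin n)) : Prop :=
  ∃ i, 1 ≤ x (i, t)

/- Columns of weight at least `1` stay. Any other column moves onto its canonical prefix and is
dropped if that prefix is empty or already carries a heavy column: its jobs are then covered by
that column, while the columns left fractional there could violate (⋆). -/
noncomputable def moveColumn (x : Fin c × Finset (Fin n) → ℝ) (p : Fin c × Finset (Fin n)) :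
    Fin c × Finset (Fin n) :=
  if 1 ≤ x p then p else (p.1, canonicalPrefix (FracSched x) p.2)

noncomputable def keptWeight (x : Fin c × Finset (Fin n) → ℝ) (p : Fin c × Finset (Fin n)) :
    ℝ :=
  if 1 ≤ x p ∨ (canonicalPrefix (FracSched x) p.2).Nonempty ∧
    ¬HasHeavyColumn x (canonicalPrefix (FracSched x) p.2) then x p else 0

noncomputable def prefixSolution (x : Fin c × Finset (Fin n) → ℝ) :
    Fin c × Finset (Fin n) → ℝ :=
  pushforward (moveColumn x) (keptWeight x)

lemma keptWeight_le (hx : ∀ p, 0 ≤ x p) (p : Fin c × Finset (Fin n)) :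
    keptWeight x p ≤ x p := by
  unfold keptWeight; split_ifs <;> simp [hx p]

lemma keptWeight_nonneg (hx : ∀ p, 0 ≤ x p) (p : Fin c × Finset (Fin n)) :
    0 ≤ keptWeight x p := by
  unfold keptWeight; split_ifs <;> simp [hx p]

lemma prefixSolution_nonneg (hx : ∀ p, 0 ≤ x p) (q : Fin c × Finset (Fin n)) :
    0 ≤ prefixSolution x q :=
  pushforward_nonneg _ _ (keptWeight_nonneg hx) q

lemma moveColumn_of_one_le (hp : 1 ≤ x p) : moveColumn x p = p := if_pos hp

lemma fracCol_of_moveColumn_eq (hx : ∀ p, 0 ≤ x p) (hpq : moveColumn x p = q)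
    (hp : keptWeight x p ≠ 0) (hp1 : ¬1 ≤ x p) :
    FracCol x p ∧ q = (p.1, canonicalPrefix (FracSched x) p.2) ∧ q.2.Nonempty ∧
      ¬HasHeavyColumn x q.2 := by
  rw [moveColumn, if_neg hp1] at hpq
  subst hpq
  by_cases hc : (canonicalPrefix (FracSched x) p.2).Nonempty ∧
    ¬HasHeavyColumn x (canonicalPrefix (FracSched x) p.2)
  · rw [keptWeight, if_pos (Or.inr hc)] at hp
    exact ⟨⟨lt_of_le_of_ne (hx p) (Ne.symm hp), not_le.1 hp1⟩, rfl, hc⟩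
  · rw [keptWeight, if_neg (by tauto)] at hp
    exact absurd rfl hp

lemma prefixSolution_of_one_le (hx : ∀ p, 0 ≤ x p) (hq : 1 ≤ x q) :
    prefixSolution x q = x q := by
  rw [prefixSolution, pushforward_eq_of_unique (moveColumn_of_one_le hq), keptWeight,
    if_pos (Or.inl hq)]
  intro p hpq hne
  by_contra hp
  by_cases hp1 : 1 ≤ x p
  · exact hne (by rwa [moveColumn_of_one_le hp1] at hpq)
  · exact (fracCol_of_moveColumn_eq hx hpq hp hp1).2.2.2 ⟨q.1, hq⟩

lemma exists_of_prefixSolution_ne_zero (hx : ∀ p, 0 ≤ x p) (h : prefixSolution x q ≠ 0)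
    (hq : ¬1 ≤ x q) :
    ∃ S, FracCol x (q.1, S) ∧ canonicalPrefix (FracSched x) S = q.2 ∧ q.2.Nonempty ∧
      ¬HasHeavyColumn x q.2 := by
  obtain ⟨p, hpq, hp⟩ := exists_of_pushforward_ne_zero h
  have hp1 : ¬1 ≤ x p := fun hp1 => hq <| by
    rw [moveColumn_of_one_le hp1] at hpq
    exact hpq ▸ hp1
  obtain ⟨hfrac, rfl, hne, hheavy⟩ := fracCol_of_moveColumn_eq hx hpq hp hp1
  exact ⟨p.2, hfrac, rfl, hne, hheavy⟩

lemma prefixSolution_canonicalPrefix (hP : SuccCoherent (FracSched x)) (hx : ∀ p, 0 ≤ x p)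
    (hS : FracSched x S) (hj : j ∈ canonicalPrefix (FracSched x) S)
    (hheavy : ¬HasHeavyColumn x (canonicalPrefix (FracSched x) S)) (i : Fin c) :
    prefixSolution x (i, canonicalPrefix (FracSched x) S) =
      if FracCol x (i, S) then x (i, S) else 0 := by
  have hsource : ∀ p, moveColumn x p = (i, canonicalPrefix (FracSched x) S) →
      keptWeight x p ≠ 0 → p = (i, S) ∧ FracCol x p := by
    intro p hpq hp
    have hp1 : ¬1 ≤ x p := fun hp1 => hheavy ⟨i, by
      rw [moveColumn_of_one_le hp1] at hpq
      exact hpq ▸ hp1⟩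
    obtain ⟨hfrac, hpre, -⟩ := fracCol_of_moveColumn_eq hx hpq hp hp1
    have hjp : j ∈ canonicalPrefix (FracSched x) p.2 := by
      rwa [← (Prod.mk.inj hpre).2]
    exact ⟨Prod.ext (Prod.mk.inj hpre).1.symm
      (hP.eq_of_mem_canonicalPrefix ⟨p.1, hfrac⟩ hS hjp hj), hfrac⟩
  by_cases hfrac : FracCol x (i, S)
  · have hmove : moveColumn x (i, S) = (i, canonicalPrefix (FracSched x) S) :=
      if_neg (not_le.2 hfrac.2)
    rw [if_pos hfrac, prefixSolution, pushforward_eq_of_unique hmove, keptWeight,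
      if_pos (Or.inr ⟨⟨j, hj⟩, hheavy⟩)]
    exact fun p hpq hne => by_contra fun hp => hne (hsource p hpq hp).1
  · rw [if_neg hfrac, prefixSolution]
    refine pushforward_eq_zero fun p hpq => by_contra fun hp => ?_
    obtain ⟨rfl, hp⟩ := hsource p hpq hp
    exact hfrac hp

lemma one_le_sum_prefixSolution (hP : SuccCoherent (FracSched x)) (hstar : StarCond x)
    (hx : ∀ p, 0 ≤ x p) (hS : FracSched x S) (hj : j ∈ canonicalPrefix (FracSched x) S)
    (hheavy : ¬HasHeavyColumn x (canonicalPrefix (FracSched x) S)) :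
    1 ≤ ∑ i, prefixSolution x (i, canonicalPrefix (FracSched x) S) := by
  obtain ⟨hjS, hcS⟩ := mem_canonicalPrefix.1 hj
  calc (1 : ℝ)
      ≤ ∑ p : Fin c × Finset (Fin n),
          if FracCol x p ∧ j ∈ p.2 ∧ PredCanonicalUpTo (FracSched x) p.2 j then x p else 0 :=
        one_le_sum_predCanonicalUpTo hP hstar ⟨S, hS, hjS⟩
    _ = ∑ i, if FracCol x (i, S) then x (i, S) else 0 := by
        rw [Fintype.sum_prod_type]
        refine Finset.sum_congr rfl fun i _ => ?_
        refine (Finset.sum_eq_single S (fun t _ htS => if_neg ?_) (by simp)).trans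
          (if_congr (and_iff_left ⟨hjS, hcS⟩) rfl rfl)
        exact fun ⟨hfrac, hjt, hct⟩ =>
          htS (hP.eq_of_predCanonicalUpTo ⟨i, hfrac⟩ hS hjt hjS hct hcS)
    _ = ∑ i, prefixSolution x (i, canonicalPrefix (FracSched x) S) :=
        Finset.sum_congr rfl fun i _ =>
          (prefixSolution_canonicalPrefix hP hx hS hj hheavy i).symm

lemma prefixSolution_canonicalPrefix_eq_zero_or_fracCol (hP : SuccCoherent (FracSched x))
    (hx : ∀ p, 0 ≤ x p) (hS : FracSched x S) (hj : j ∈ canonicalPrefix (FracSched x) S)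
    (hheavy : ¬HasHeavyColumn x (canonicalPrefix (FracSched x) S)) (i : Fin c) :
    prefixSolution x (i, canonicalPrefix (FracSched x) S) = 0 ∨
      FracCol (prefixSolution x) (i, canonicalPrefix (FracSched x) S) := by
  rw [FracCol, prefixSolution_canonicalPrefix hP hx hS hj hheavy]
  split_ifs with hfrac
  exacts [Or.inr hfrac, Or.inl rfl]

lemma exists_of_fracCol_prefixSolution (hx : ∀ p, 0 ≤ x p) {q : Fin c × Finset (Fin n)}
    (hq : FracCol (prefixSolution x) q) :
    ∃ S, FracSched x S ∧ canonicalPrefix (FracSched x) S = q.2 ∧ ¬HasHeavyColumn x q.2 := by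
  have hq1 : ¬1 ≤ x q := fun h => (prefixSolution_of_one_le hx h ▸ hq.2).not_ge h
  obtain ⟨S, hfrac, hpre, -, hheavy⟩ := exists_of_prefixSolution_ne_zero hx hq.1.ne' hq1
  exact ⟨S, ⟨q.1, hfrac⟩, hpre, hheavy⟩

lemma le_prefixSolution_of_notMem_Jf (hx : ∀ p, 0 ≤ x p) (hj : j ∉ Jf x)
    {p : Fin c × Finset (Fin n)} (hjp : j ∈ p.2) : x p ≤ prefixSolution x p := by
  by_cases hp1 : 1 ≤ x p
  · exact (prefixSolution_of_one_le hx hp1).ge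
  · have hp0 : x p = 0 :=
      (hx p).antisymm' (not_lt.1 fun hpos => hj ⟨p.2, ⟨p.1, hpos, not_le.1 hp1⟩, hjp⟩)
    exact hp0 ▸ prefixSolution_nonneg hx p

lemma feasible_prefixSolution (hP : SuccCoherent (FracSched x)) (hstar : StarCond x)
    (hx : Feasible r d L 𝒥 x) : Feasible r d L 𝒥 (prefixSolution x) := by
  obtain ⟨hx0, hsched, hcover⟩ := hx
  refine ⟨prefixSolution_nonneg hx0, fun q hq => ?_, fun j => ?_⟩
  · by_cases hq1 : 1 ≤ x q
    · exact hsched q (by linarith)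
    · obtain ⟨S, hfrac, hpre, hne, -⟩ := exists_of_prefixSolution_ne_zero hx0 hq.ne' hq1
      exact IsSchedule.mono (hsched (q.1, S) hfrac.1) (hpre ▸ canonicalPrefix_subset) hne
  have hterm_nonneg : ∀ p : Fin c × Finset (Fin n),
      0 ≤ if j ∈ p.2 then prefixSolution x p else 0 := fun p => by
    split_ifs
    exacts [prefixSolution_nonneg hx0 p, le_rfl]
  by_cases hj : j ∈ Jf x
  · obtain ⟨S, hS, hjS⟩ := exists_mem_canonicalPrefix hP hstar hj
    by_cases hheavy : HasHeavyColumn x (canonicalPrefix (FracSched x) S)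
    · obtain ⟨i, hi⟩ := hheavy
      calc (1 : ℝ) ≤ prefixSolution x (i, canonicalPrefix (FracSched x) S) :=
            hi.trans (prefixSolution_of_one_le hx0 hi).ge
        _ = if j ∈ (i, canonicalPrefix (FracSched x) S).2 then
              prefixSolution x (i, canonicalPrefix (FracSched x) S) else 0 := (if_pos hjS).symm
        _ ≤ _ := Finset.single_le_sum (fun p _ => hterm_nonneg p) (Finset.mem_univ _)
    · calc (1 : ℝ) ≤ ∑ i, prefixSolution x (i, canonicalPrefix (FracSched x) S) :=
            one_le_sum_prefixSolution hP hstar hx0 hS hjS hheavy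
        _ = ∑ i, if j ∈ (i, canonicalPrefix (FracSched x) S).2 then
              prefixSolution x (i, canonicalPrefix (FracSched x) S) else 0 :=
            Finset.sum_congr rfl fun i _ => (if_pos hjS).symm
        _ ≤ _ := sum_apply_mk_le_sum hterm_nonneg _
  · refine (hcover j).trans (Finset.sum_le_sum fun p _ => ?_)
    split_ifs with hjp
    exacts [le_prefixSolution_of_notMem_Jf hx0 hj hjp, le_rfl]

lemma cost_prefixSolution_le {w : Fin c → ℝ} (hw : ∀ i, 0 < w i) (hx : ∀ p, 0 ≤ x p) :
    cost w (prefixSolution x) ≤ cost w x := by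
  have hfst : ∀ p, (moveColumn x p).1 = p.1 := fun p => by
    unfold moveColumn; split_ifs <;> rfl
  calc cost w (prefixSolution x) = ∑ p, w (moveColumn x p).1 * keptWeight x p :=
        sum_mul_pushforward (moveColumn x) (keptWeight x) fun q => w q.1
    _ ≤ cost w x := Finset.sum_le_sum fun p _ => by
        rw [hfst]
        exact mul_le_mul_of_nonneg_left (keptWeight_le hx p) (hw p.1).le

lemma starCond_prefixSolution (hP : SuccCoherent (FracSched x)) (hstar : StarCond x)
    (hx : ∀ p, 0 ≤ x p) : StarCond (prefixSolution x) := by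
  rintro j ⟨T, ⟨i, hfrac⟩, hjT⟩
  obtain ⟨S, hS, rfl, hheavy⟩ := exists_of_fracCol_prefixSolution hx hfrac
  refine (one_le_sum_prefixSolution hP hstar hx hS hjT hheavy).trans
    (le_of_eq_of_le (Finset.sum_congr rfl fun i _ => ?_)
      (sum_apply_mk_le_sum (fun p => ?_) (canonicalPrefix (FracSched x) S)))
  · rcases prefixSolution_canonicalPrefix_eq_zero_or_fracCol hP hx hS hjT hheavy i with h0 | hf
    · rw [h0, ite_self]
    · exact (if_pos ⟨hf, hjT⟩).symm
  · split_ifs with h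
    exacts [h.1.1.le, le_rfl]

lemma eq_of_fracSched_prefixSolution (hP : SuccCoherent (FracSched x)) (hx : ∀ p, 0 ≤ x p)
    {s s' : Finset (Fin n)} (hs : FracSched (prefixSolution x) s)
    (hs' : FracSched (prefixSolution x) s') (hj : j ∈ s) (hj' : j ∈ s') : s = s' := by
  obtain ⟨i, hfrac⟩ := hs
  obtain ⟨i', hfrac'⟩ := hs'
  obtain ⟨S, hS, rfl, -⟩ := exists_of_fracCol_prefixSolution hx hfrac
  obtain ⟨S', hS', rfl, -⟩ := exists_of_fracCol_prefixSolution hx hfrac'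
  rw [hP.eq_of_mem_canonicalPrefix hS hS' hj hj']

end PrefixSolution

end FixedJobScheduling

open FixedJobScheduling in
theorem same_successor_implies_same_pred_succ_general {n c : ℕ} (r d : Fin n → ℝ) (L : ℝ) (𝒥 : Fin c → Set (Fin n)) (w : Fin c → ℝ)
    (hw : ∀ i, 0 < w i)
    (x : Fin c × Finset (Fin n) → ℝ)
    (hopt : Optimal r d L 𝒥 w x) (hstar : StarCond x)
    (hsucc : ∀ j ∈ Jf x, ∀ s s' : Finset (Fin n),
      FracSched x s → FracSched x s' → j ∈ s → j ∈ s' → succIn s j = succIn s' j) :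
    ∃ x' : Fin c × Finset (Fin n) → ℝ,
      Optimal r d L 𝒥 w x' ∧ StarCond x' ∧
      ∀ j ∈ Jf x', ∀ s s' : Finset (Fin n),
        FracSched x' s → FracSched x' s' → j ∈ s → j ∈ s' →
          predIn s j = predIn s' j ∧ succIn s j = succIn s' j := by
  obtain ⟨hfeas, hmin⟩ := hopt
  have hP : SuccCoherent (FracSched x) :=
    fun j s s' hs hs' hj hj' => hsucc j ⟨s, hs, hj⟩ s s' hs hs' hj hj'
  refine ⟨prefixSolution x, ⟨feasible_prefixSolution hP hstar hfeas, fun y hy =>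
    (cost_prefixSolution_le hw hfeas.1).trans (hmin y hy)⟩,
    starCond_prefixSolution hP hstar hfeas.1, fun j _ s s' hs hs' hj hj' => ?_⟩
  obtain rfl := eq_of_fracSched_prefixSolution hP hfeas.1 hs hs' hj hj'
  exact ⟨rfl, rfl⟩

theorem same_successor_implies_same_pred_succ {n c : ℕ} (r d : Fin n → ℝ) (L : ℝ) (𝒥 : Fin c → Set (Fin n)) (w : Fin c → ℝ)
    (hrd : ∀ j, r j ≤ d j) (hmono : ∀ j k : Fin n, j ≤ k → r j ≤ r k)
    (hL : 0 < L) (hw : ∀ i, 0 < w i)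
    (x : Fin c × Finset (Fin n) → ℝ)
    (hopt : Optimal r d L 𝒥 w x) (hstar : StarCond x)
    (hsucc : ∀ j ∈ Jf x, ∀ s s' : Finset (Fin n),
      FracSched x s → FracSched x s' → j ∈ s → j ∈ s' → succIn s j = succIn s' j) :
    ∃ x' : Fin c × Finset (Fin n) → ℝ,
      Optimal r d L 𝒥 w x' ∧ StarCond x' ∧
      ∀ j ∈ Jf x', ∀ s s' : Finset (Fin n),
        FracSched x' s → FracSched x' s' → j ∈ s → j ∈ s' →
          predIn s j = predIn s' j ∧ succIn s j = succIn s' j :=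
  same_successor_implies_same_pred_succ_general r d L 𝒥 w hw x hopt hstar hsucc
end

section
/- Let x be an optimal feasible solution satisfying condition (⋆). Suppose that every job j ∈ 𝒥_f(x) has both the same immediate predecessor and the same immediate successor (possibly dummy) in every fractional schedule of x containing j. Then there exists a feasible integral solution whose cost equals the cost of x; in particular, some optimal feasible solution is integral. -/
open scoped Classical BigOperators

/-!
Walking from a shared job along immediate successors and predecessors shows that two fractional
schedules of `x` with a common job coincide, so the fractional schedules are pairwise disjoint.
By (⋆), the fractional columns on a fractional schedule `s` then carry total value at least `1`,
so replacing them by the single column `(i, s)` of a cheapest fractional class `i`, at value `1`,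
keeps every job covered without raising the cost. Setting the columns of value at least `1` to `1`
as well gives an integral feasible solution of cost at most, hence by optimality equal to, that
of `x`.
-/

section LinearOrder

variable {α : Type*} [LinearOrder α] {s t : Finset α} {j : α}

theorem Finset.mem_of_le_of_forall_next_mem (hjs : j ∈ s) (hjt : j ∈ t)
    (hnext : ∀ p ∈ s, p ∈ t → ∀ k ∈ s, p < k → (∀ b ∈ s, p < b → k ≤ b) → k ∈ t) :
    ∀ k ∈ s, j ≤ k → k ∈ t := by
  by_contra! hmiss
  -- `k₀` is the least element of `s` above `j` missing from `t`, and `p` its predecessor in `s`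
  obtain ⟨k₀, hk₀, hk₀min⟩ :
      ∃ k₀ ∈ s.filter (fun k => j ≤ k ∧ k ∉ t), ∀ k ∈ s, j ≤ k → k ∉ t → k₀ ≤ k := by
    obtain ⟨k, hks, hjk, hkt⟩ := hmiss
    have hkB : k ∈ s.filter (fun k => j ≤ k ∧ k ∉ t) := Finset.mem_filter.2 ⟨hks, hjk, hkt⟩
    obtain ⟨k₀, hk₀, hmin⟩ := Finset.exists_min_image _ id ⟨k, hkB⟩
    exact ⟨k₀, hk₀, fun k hks hjk hkt => hmin k (Finset.mem_filter.2 ⟨hks, hjk, hkt⟩)⟩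
  obtain ⟨hk₀s, hjk₀, hk₀t⟩ := Finset.mem_filter.1 hk₀
  have hjk₀ : j < k₀ := hjk₀.lt_of_ne (by rintro rfl; exact hk₀t hjt)
  have hjA : j ∈ s.filter (· < k₀) := Finset.mem_filter.2 ⟨hjs, hjk₀⟩
  obtain ⟨p, hp, hpmax⟩ := Finset.exists_max_image _ id ⟨j, hjA⟩
  obtain ⟨hps, hpk₀⟩ := Finset.mem_filter.1 hp
  have hjp : j ≤ p := hpmax j hjA
  have hpt : p ∈ t := by
    by_contra hpt
    exact (hk₀min p hps hjp hpt).not_gt hpk₀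
  refine hk₀t (hnext p hps hpt k₀ hk₀s hpk₀ fun b hbs hpb => ?_)
  by_contra! hbk₀
  exact hpb.not_ge (hpmax b (Finset.mem_filter.2 ⟨hbs, hbk₀⟩))

theorem Finset.mem_of_ge_of_forall_prev_mem (hjs : j ∈ s) (hjt : j ∈ t)
    (hprev : ∀ p ∈ s, p ∈ t → ∀ k ∈ s, k < p → (∀ b ∈ s, b < p → b ≤ k) → k ∈ t) :
    ∀ k ∈ s, k ≤ j → k ∈ t :=
  Finset.mem_of_le_of_forall_next_mem (α := αᵒᵈ) hjs hjt hprev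

end LinearOrder

section Neighbours

variable {n : ℕ} {s t : Finset (Fin n)} {p k : Fin n}

theorem succIn_eq_of_forall_le (hks : k ∈ s) (hpk : p < k) (hmin : ∀ b ∈ s, p < b → k ≤ b) :
    succIn s p = k :=
  le_antisymm (Finset.min_le (Finset.mem_filter.2 ⟨hks, hpk⟩)) <|
    Finset.le_min fun b hb => by
      obtain ⟨hbs, hpb⟩ := Finset.mem_filter.1 hb
      exact WithTop.coe_le_coe.2 (hmin b hbs hpb)

theorem predIn_eq_of_forall_le (hks : k ∈ s) (hkp : k < p) (hmax : ∀ b ∈ s, b < p → b ≤ k) :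
    predIn s p = k :=
  le_antisymm (Finset.max_le fun b hb => by
      obtain ⟨hbs, hbp⟩ := Finset.mem_filter.1 hb
      exact WithBot.coe_le_coe.2 (hmax b hbs hbp)) <|
    Finset.le_max (Finset.mem_filter.2 ⟨hks, hkp⟩)

theorem mem_of_succIn_eq (h : succIn s p = k) : k ∈ s :=
  (Finset.mem_filter.1 (Finset.mem_of_min h)).1

theorem mem_of_predIn_eq (h : predIn s p = k) : k ∈ s :=
  (Finset.mem_filter.1 (Finset.mem_of_max h)).1

theorem subset_of_predIn_succIn_eq {j : Fin n} (hjs : j ∈ s) (hjt : j ∈ t)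
    (h : ∀ k ∈ s, k ∈ t → predIn s k = predIn t k ∧ succIn s k = succIn t k) : s ⊆ t := by
  intro k hks
  rcases le_total j k with hjk | hkj
  · refine Finset.mem_of_le_of_forall_next_mem hjs hjt
      (fun p hps hpt k hks hpk hmin => ?_) k hks hjk
    exact mem_of_succIn_eq ((h p hps hpt).2 ▸ succIn_eq_of_forall_le hks hpk hmin)
  · refine Finset.mem_of_ge_of_forall_prev_mem hjs hjt
      (fun p hps hpt k hks hkp hmax => ?_) k hks hkj
    exact mem_of_predIn_eq ((h p hps hpt).1 ▸ predIn_eq_of_forall_le hks hkp hmax)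

theorem eq_of_predIn_succIn_eq {j : Fin n} (hjs : j ∈ s) (hjt : j ∈ t)
    (h : ∀ k ∈ s, k ∈ t → predIn s k = predIn t k ∧ succIn s k = succIn t k) : s = t :=
  (subset_of_predIn_succIn_eq hjs hjt h).antisymm <|
    subset_of_predIn_succIn_eq hjt hjs fun k hkt hks => (h k hks hkt).imp Eq.symm Eq.symm

end Neighbours

theorem pairwiseDisjoint_fracSched {n c : ℕ} {x : Fin c × Finset (Fin n) → ℝ}
    (hps : ∀ j ∈ Jf x, ∀ s s' : Finset (Fin n),
      FracSched x s → FracSched x s' → j ∈ s → j ∈ s' →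
        predIn s j = predIn s' j ∧ succIn s j = succIn s' j) :
    {s | FracSched x s}.PairwiseDisjoint id := by
  intro s hs t ht hst
  refine Finset.disjoint_left.2 fun j hjs hjt => hst ?_
  exact eq_of_predIn_succIn_eq hjs hjt fun k hks hkt => hps k ⟨s, hs, hks⟩ s t hs ht hks hkt

section Rounding

variable {n c : ℕ} {r d : Fin n → ℝ} {L : ℝ} {𝒥 : Fin c → Set (Fin n)} {w : Fin c → ℝ}
  {x : Fin c × Finset (Fin n) → ℝ} {pick : Finset (Fin n) → Fin c}

def IsCheapestFracClass (w : Fin c → ℝ) (x : Fin c × Finset (Fin n) → ℝ)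
    (pick : Finset (Fin n) → Fin c) : Prop :=
  ∀ s, FracSched x s → FracCol x (pick s, s) ∧ ∀ i, FracCol x (i, s) → w (pick s) ≤ w i

theorem exists_isCheapestFracClass [Nonempty (Fin c)] (w : Fin c → ℝ)
    (x : Fin c × Finset (Fin n) → ℝ) : ∃ pick, IsCheapestFracClass w x pick := by
  have h : ∀ s, ∃ i, FracSched x s → FracCol x (i, s) ∧ ∀ i', FracCol x (i', s) → w i ≤ w i' := by
    intro s
    by_cases hs : FracSched x s
    · obtain ⟨i, hi⟩ := hs
      have hiF : i ∈ Finset.univ.filter fun i => FracCol x (i, s) := by simpa using hi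
      obtain ⟨i₀, hi₀, hmin⟩ := Finset.exists_min_image _ w ⟨i, hiF⟩
      exact ⟨i₀, fun _ => ⟨(Finset.mem_filter.1 hi₀).2, fun i' hi' => hmin i' (by simpa using hi')⟩⟩
    · exact ⟨Classical.arbitrary _, fun hs' => absurd hs' hs⟩
  choose pick hpick using h
  exact ⟨pick, hpick⟩

noncomputable def roundWith (x : Fin c × Finset (Fin n) → ℝ) (pick : Finset (Fin n) → Fin c)
    (p : Fin c × Finset (Fin n)) : ℝ :=
  (if 1 ≤ x p then 1 else 0) + (if FracCol x p ∧ p.1 = pick p.2 then 1 else 0)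

theorem roundWith_nonneg (p : Fin c × Finset (Fin n)) : 0 ≤ roundWith x pick p := by
  unfold roundWith; split_ifs <;> norm_num

theorem pos_of_roundWith_pos {p : Fin c × Finset (Fin n)} (h : 0 < roundWith x pick p) :
    0 < x p := by
  unfold roundWith at h
  split_ifs at h with h₁ h₂ h₂
  exacts [one_pos.trans_le h₁, one_pos.trans_le h₁, h₂.1.1, by norm_num at h]

theorem integral_roundWith : Integral (roundWith x pick) := by
  intro p
  unfold roundWith
  split_ifs with h₁ h₂ h₂
  exacts [absurd h₁ (not_le.2 h₂.1.2), by norm_num, by norm_num, by norm_num]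

theorem Feasible.exists_one_le_or_mem_Jf (hfeas : Feasible r d L 𝒥 x) (j : Fin n) :
    (∃ p : Fin c × Finset (Fin n), j ∈ p.2 ∧ 1 ≤ x p) ∨ j ∈ Jf x := by
  by_contra! h
  have hzero : ∀ p : Fin c × Finset (Fin n), (if j ∈ p.2 then x p else 0) = 0 := by
    intro p
    split_ifs with hjp
    · by_contra hne
      have hpos : 0 < x p := (hfeas.1 p).lt_of_ne' hne
      exact h.2 ⟨p.2, ⟨p.1, hpos, h.1 p hjp⟩, hjp⟩
    · rfl
  have hcov := hfeas.2.2 j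
  simp only [hzero, Finset.sum_const_zero] at hcov
  norm_num at hcov

theorem feasible_roundWith (hfeas : Feasible r d L 𝒥 x) (hpick : IsCheapestFracClass w x pick) :
    Feasible r d L 𝒥 (roundWith x pick) := by
  refine ⟨roundWith_nonneg, fun p hp => hfeas.2.1 p (pos_of_roundWith_pos hp), fun j => ?_⟩
  suffices ∃ p : Fin c × Finset (Fin n), j ∈ p.2 ∧ 1 ≤ roundWith x pick p by
    obtain ⟨p, hjp, hp⟩ := this
    calc 1 ≤ if j ∈ p.2 then roundWith x pick p else 0 := by rwa [if_pos hjp]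
      _ ≤ _ := Finset.single_le_sum (f := fun p => if j ∈ p.2 then roundWith x pick p else 0)
          (fun p _ => by split_ifs; exacts [roundWith_nonneg p, le_rfl]) (Finset.mem_univ p)
  rcases hfeas.exists_one_le_or_mem_Jf j with ⟨p, hjp, hp⟩ | ⟨s, hs, hjs⟩
  · refine ⟨p, hjp, ?_⟩
    exact le_add_of_le_of_nonneg (if_pos hp).ge (by split_ifs <;> norm_num)
  · refine ⟨(pick s, s), hjs, ?_⟩
    exact le_add_of_nonneg_of_le (by split_ifs <;> norm_num) (if_pos ⟨(hpick s hs).1, rfl⟩).ge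

theorem one_le_sum_fracCol (hstar : StarCond x) (hdisj : {s | FracSched x s}.PairwiseDisjoint id)
    {s : Finset (Fin n)} (hs : FracSched x s) {j : Fin n} (hjs : j ∈ s) :
    1 ≤ ∑ i, if FracCol x (i, s) then x (i, s) else 0 := by
  calc 1 ≤ ∑ p : Fin c × Finset (Fin n), if FracCol x p ∧ j ∈ p.2 then x p else 0 :=
        hstar j ⟨s, hs, hjs⟩
    _ = ∑ t, ∑ i, if FracCol x (i, t) ∧ j ∈ t then x (i, t) else 0 :=
        Fintype.sum_prod_type_right _
    _ = ∑ i, if FracCol x (i, s) ∧ j ∈ s then x (i, s) else 0 := by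
        refine Fintype.sum_eq_single s fun t hts => Finset.sum_eq_zero fun i _ => if_neg ?_
        rintro ⟨hit, hjt⟩
        exact hts (hdisj.elim ⟨i, hit⟩ hs (Finset.not_disjoint_iff.2 ⟨j, hjt, hjs⟩))
    _ = _ := by simp only [hjs, and_true]

theorem sum_cheapest_le_sum (hw : ∀ i, 0 ≤ w i) (hfeas : Feasible r d L 𝒥 x)
    (hstar : StarCond x) (hdisj : {s | FracSched x s}.PairwiseDisjoint id)
    (hpick : IsCheapestFracClass w x pick) (s : Finset (Fin n)) :
    ∑ i, (if FracCol x (i, s) ∧ i = pick s then w i else 0) ≤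
      ∑ i, if FracCol x (i, s) then w i * x (i, s) else 0 := by
  by_cases hs : FracSched x s
  · obtain ⟨hfrac, hmin⟩ := hpick s hs
    obtain ⟨j, hjs⟩ := (hfeas.2.1 _ hfrac.1).1
    calc ∑ i, (if FracCol x (i, s) ∧ i = pick s then w i else 0) = w (pick s) := by
          rw [Fintype.sum_eq_single (pick s) fun i hi => if_neg fun h => hi h.2,
            if_pos ⟨hfrac, rfl⟩]
      _ ≤ w (pick s) * ∑ i, if FracCol x (i, s) then x (i, s) else 0 :=
          le_mul_of_one_le_right (hw _) (one_le_sum_fracCol hstar hdisj hs hjs)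
      _ = ∑ i, if FracCol x (i, s) then w (pick s) * x (i, s) else 0 := by
          simp only [Finset.mul_sum, mul_ite, mul_zero]
      _ ≤ _ := Finset.sum_le_sum fun i _ => by
          split_ifs with hi
          exacts [mul_le_mul_of_nonneg_right (hmin i hi) hi.1.le, le_rfl]
  · have hnf : ∀ i, ¬ FracCol x (i, s) := fun i hi => hs ⟨i, hi⟩
    simp [hnf]

theorem cost_roundWith_le (hw : ∀ i, 0 ≤ w i) (hfeas : Feasible r d L 𝒥 x)
    (hstar : StarCond x) (hdisj : {s | FracSched x s}.PairwiseDisjoint id)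
    (hpick : IsCheapestFracClass w x pick) :
    cost w (roundWith x pick) ≤ cost w x := by
  have hsplit : cost w (roundWith x pick) = ∑ p, (if 1 ≤ x p then w p.1 else 0) +
      ∑ p, if FracCol x p ∧ p.1 = pick p.2 then w p.1 else 0 := by
    simp only [cost, roundWith, mul_add, mul_ite, mul_one, mul_zero, Finset.sum_add_distrib]
  have hfrac : ∑ p, (if FracCol x p ∧ p.1 = pick p.2 then w p.1 else 0) ≤
      ∑ p, if FracCol x p then w p.1 * x p else 0 := by
    rw [Fintype.sum_prod_type_right, Fintype.sum_prod_type_right]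
    exact Finset.sum_le_sum fun s _ => sum_cheapest_le_sum hw hfeas hstar hdisj hpick s
  have hwhole : ∑ p, (if 1 ≤ x p then w p.1 else 0) +
      ∑ p, (if FracCol x p then w p.1 * x p else 0) ≤ cost w x := by
    rw [cost, ← Finset.sum_add_distrib]
    refine Finset.sum_le_sum fun p _ => ?_
    have hwx : 0 ≤ w p.1 * x p := mul_nonneg (hw p.1) (hfeas.1 p)
    split_ifs with h₁ h₂ h₂
    · exact absurd h₁ (not_le.2 h₂.2)
    · simpa using le_mul_of_one_le_right (hw p.1) h₁
    · simp
    · simpa using hwx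
  linarith

theorem exists_integral_feasible_cost_le (hw : ∀ i, 0 ≤ w i) (hfeas : Feasible r d L 𝒥 x)
    (hstar : StarCond x) (hdisj : {s | FracSched x s}.PairwiseDisjoint id) :
    ∃ x', Feasible r d L 𝒥 x' ∧ Integral x' ∧ cost w x' ≤ cost w x := by
  rcases isEmpty_or_nonempty (Fin c) with hc | hc
  · exact ⟨x, hfeas, fun p => isEmptyElim p.1, le_rfl⟩
  obtain ⟨pick, hpick⟩ := exists_isCheapestFracClass w x
  exact ⟨roundWith x pick, feasible_roundWith hfeas hpick, integral_roundWith,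
    cost_roundWith_le hw hfeas hstar hdisj hpick⟩

end Rounding

theorem same_pred_succ_implies_integral_optimum_general {n c : ℕ} (r d : Fin n → ℝ) (L : ℝ) (𝒥 : Fin c → Set (Fin n)) (w : Fin c → ℝ)
    (hw : ∀ i, 0 < w i)
    (x : Fin c × Finset (Fin n) → ℝ)
    (hopt : Optimal r d L 𝒥 w x) (hstar : StarCond x)
    (hps : ∀ j ∈ Jf x, ∀ s s' : Finset (Fin n),
      FracSched x s → FracSched x s' → j ∈ s → j ∈ s' →
        predIn s j = predIn s' j ∧ succIn s j = succIn s' j) :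
    ∃ x' : Fin c × Finset (Fin n) → ℝ,
      Feasible r d L 𝒥 x' ∧ Integral x' ∧ cost w x' = cost w x ∧
      Optimal r d L 𝒥 w x' := by
  obtain ⟨hfeas, hmin⟩ := hopt
  obtain ⟨x', hfeas', hint', hle⟩ := exists_integral_feasible_cost_le (fun i => (hw i).le) hfeas
    hstar (pairwiseDisjoint_fracSched hps)
  have heq : cost w x' = cost w x := hle.antisymm (hmin x' hfeas')
  exact ⟨x', hfeas', hint', heq, hfeas', fun y hy => heq ▸ hmin y hy⟩

theorem same_pred_succ_implies_integral_optimum {n c : ℕ} (r d : Fin n → ℝ) (L : ℝ) (𝒥 : Fin c → Set (Fin n)) (w : Fin c → ℝ)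
    (hrd : ∀ j, r j ≤ d j) (hmono : ∀ j k : Fin n, j ≤ k → r j ≤ r k)
    (hL : 0 < L) (hw : ∀ i, 0 < w i)
    (x : Fin c × Finset (Fin n) → ℝ)
    (hopt : Optimal r d L 𝒥 w x) (hstar : StarCond x)
    (hps : ∀ j ∈ Jf x, ∀ s s' : Finset (Fin n),
      FracSched x s → FracSched x s' → j ∈ s → j ∈ s' →
        predIn s j = predIn s' j ∧ succIn s j = succIn s' j) :
    ∃ x' : Fin c × Finset (Fin n) → ℝ,
      Feasible r d L 𝒥 x' ∧ Integral x' ∧ cost w x' = cost w x ∧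
      Optimal r d L 𝒥 w x' :=
  same_pred_succ_implies_integral_optimum_general r d L 𝒥 w hw x hopt hstar hps
end

section
/- Let x be an optimal feasible solution satisfying condition (⋆). If every job j ∈ 𝒥_f(x) has the same immediate successor (possibly dummy) in every fractional schedule of x containing j, then there exists a feasible integral solution whose cost equals the cost of x; in particular, uniqueness of immediate successors guarantees that some optimal feasible solution is integral. -/
open scoped Classical BigOperators

/-!
Two fractional schedules of `x` through a common job `j` have the same successor at every common
job, so they agree from `j` on. Hence the fractional schedule through `j` that starts earliest has
a private job, its first one, which lies in no other fractional schedule; by (⋆) at that job the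
fractional columns on this schedule have total value at least `1`. Setting the column of such a
schedule on its cheapest class to `1` and every other fractional column to `0` still covers
`𝒥_f(x)` and, schedule by schedule, does not raise the cost, so by optimality the cost is equal.
-/

open Finset

lemma le_sum_mul_of_one_le_sum {ι R : Type*} [Semiring R] [PartialOrder R] [IsOrderedRing R]
    {F : Finset ι} {w a : ι → R} {i₀ : ι} (hw : 0 ≤ w i₀) (hmin : ∀ i ∈ F, w i₀ ≤ w i)
    (ha : ∀ i ∈ F, 0 ≤ a i) (h1 : 1 ≤ ∑ i ∈ F, a i) : w i₀ ≤ ∑ i ∈ F, w i * a i :=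
  calc w i₀ ≤ w i₀ * ∑ i ∈ F, a i := le_mul_of_one_le_right hw h1
    _ = ∑ i ∈ F, w i₀ * a i := mul_sum _ _ _
    _ ≤ ∑ i ∈ F, w i * a i :=
      sum_le_sum fun i hi => mul_le_mul_of_nonneg_right (hmin i hi) (ha i hi)

section Successor

variable {n : ℕ} {s s' : Finset (Fin n)} {j k : Fin n}

lemma mem_of_succIn_eq_coe (h : succIn s j = k) : k ∈ s :=
  (mem_filter.1 (mem_of_min h)).1

lemma succIn_eq_coe (hks : k ∈ s) (hjk : j < k) (hgap : ∀ l ∈ s, j < l → k ≤ l) :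
    succIn s j = k :=
  le_antisymm (min_le (mem_filter.2 ⟨hks, hjk⟩)) <| Finset.le_min fun l hl =>
    WithTop.coe_le_coe.2 (hgap l (mem_filter.1 hl).1 (mem_filter.1 hl).2)

lemma mem_of_le_of_succIn_eq (hjs : j ∈ s) (hjs' : j ∈ s')
    (hsucc : ∀ p ∈ s, p ∈ s' → succIn s p = succIn s' p) (hks : k ∈ s) (hjk : j ≤ k) :
    k ∈ s' := by
  induction k using WellFoundedLT.induction with
  | _ k ih =>
  rcases hjk.eq_or_lt with rfl | hjk
  · exact hjs'
  -- `p` is the predecessor of `k` in `s`, which lies in `s'` by induction.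
  set B := s.filter fun l => j ≤ l ∧ l < k
  have hB : B.Nonempty := ⟨j, mem_filter.2 ⟨hjs, le_rfl, hjk⟩⟩
  set p := B.max' hB
  obtain ⟨hps, hjp, hpk⟩ := mem_filter.1 (B.max'_mem hB)
  have hgap : ∀ l ∈ s, p < l → k ≤ l := fun l hls hpl =>
    not_lt.1 fun hlk => (B.le_max' l (mem_filter.2 ⟨hls, hjp.trans hpl.le, hlk⟩)).not_gt hpl
  have hps' : p ∈ s' := ih p hpk hps hjp
  exact mem_of_succIn_eq_coe ((hsucc p hps hps').symm.trans (succIn_eq_coe hks hpk hgap))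

end Successor

section Fractional

variable {n c : ℕ} {x : Fin c × Finset (Fin n) → ℝ} {s s' : Finset (Fin n)}

def UniqueSuccessors (x : Fin c × Finset (Fin n) → ℝ) : Prop :=
  ∀ j ∈ Jf x, ∀ s s' : Finset (Fin n),
    FracSched x s → FracSched x s' → j ∈ s → j ∈ s' → succIn s j = succIn s' j

lemma UniqueSuccessors.mem_of_le (hx : UniqueSuccessors x) {j k : Fin n} (hs : FracSched x s)
    (hs' : FracSched x s') (hjs : j ∈ s) (hjs' : j ∈ s') (hks : k ∈ s) (hjk : j ≤ k) : k ∈ s' :=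
  mem_of_le_of_succIn_eq hjs hjs' (fun p hp hp' => hx p ⟨s, hs, hp⟩ s s' hs hs' hp hp') hks hjk

def HasPrivateJob (x : Fin c × Finset (Fin n) → ℝ) (s : Finset (Fin n)) : Prop :=
  ∃ m ∈ s, ∀ s', FracSched x s' → m ∈ s' → s' = s

lemma UniqueSuccessors.exists_hasPrivateJob (hx : UniqueSuccessors x) {j : Fin n}
    (hj : j ∈ Jf x) : ∃ s, FracSched x s ∧ HasPrivateJob x s ∧ j ∈ s := by
  obtain ⟨s, hs, hmin⟩ := exists_min_image ({s | FracSched x s ∧ j ∈ s} : Finset _) Finset.min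
    (by obtain ⟨s, hs⟩ := hj; exact ⟨s, by simpa using hs⟩)
  simp only [mem_filter, mem_univ, true_and, and_imp] at hs hmin
  obtain ⟨hs, hjs⟩ := hs
  have hne : s.Nonempty := ⟨j, hjs⟩
  set m := s.min' hne
  have hms : m ∈ s := s.min'_mem hne
  refine ⟨s, hs, ⟨m, hms, fun s' hs' hms' => ?_⟩, hjs⟩
  have hjs' : j ∈ s' := hx.mem_of_le hs hs' hms hms' hjs (s.min'_le j hjs)
  ext k
  refine ⟨fun hks' => ?_, fun hks => hx.mem_of_le hs hs' hms hms' hks (s.min'_le k hks)⟩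
  by_cases hmk : m ≤ k
  · exact hx.mem_of_le hs' hs hms' hms hks' hmk
  · have : (m : WithTop (Fin n)) ≤ k := by
      rw [coe_min']
      exact (hmin s' hs' hjs').trans (min_le hks')
    exact absurd (WithTop.coe_le_coe.1 this) hmk

lemma StarCond.one_le_sum_of_hasPrivateJob (hstar : StarCond x) (hs : FracSched x s)
    (hpriv : HasPrivateJob x s) : 1 ≤ ∑ i with FracCol x (i, s), x (i, s) := by
  obtain ⟨m, hms, hm⟩ := hpriv
  calc 1 ≤ ∑ p : Fin c × Finset (Fin n), if FracCol x p ∧ m ∈ p.2 then x p else 0 :=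
        hstar m ⟨s, hs, hms⟩
    _ = ∑ i, if FracCol x (i, s) then x (i, s) else 0 := by
        rw [Fintype.sum_prod_type]
        refine sum_congr rfl fun i _ => ?_
        rw [sum_eq_single s]
        · simp only [hms, and_true]
        · exact fun s' _ hs's => if_neg fun ⟨hf, hms'⟩ => hs's (hm s' ⟨i, hf⟩ hms')
        · simp
    _ = _ := (sum_filter _ _).symm

/-- Ties are broken by the class index, so that the cheapest class is unique. -/
def IsCheapestClass (w : Fin c → ℝ) (x : Fin c × Finset (Fin n) → ℝ) (i : Fin c)
    (s : Finset (Fin n)) : Prop :=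
  ∀ i', FracCol x (i', s) → toLex (w i, i) ≤ toLex (w i', i')

lemma exists_isCheapestClass (w : Fin c → ℝ) (hs : FracSched x s) :
    ∃ i, FracCol x (i, s) ∧ IsCheapestClass w x i s := by
  obtain ⟨i, hi, hmin⟩ := exists_min_image ({i | FracCol x (i, s)} : Finset (Fin c))
    (fun i => toLex (w i, i)) (by obtain ⟨i, hi⟩ := hs; exact ⟨i, by simpa using hi⟩)
  exact ⟨i, by simpa using hi, fun i' hi' => hmin i' (by simpa using hi')⟩

variable {w : Fin c → ℝ} {i i' : Fin c}

lemma IsCheapestClass.eq (h : IsCheapestClass w x i s) (h' : IsCheapestClass w x i' s)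
    (hi : FracCol x (i, s)) (hi' : FracCol x (i', s)) : i = i' :=
  (Prod.ext_iff.1 (toLex_inj.1 (le_antisymm (h i' hi') (h' i hi)))).2

lemma IsCheapestClass.le (h : IsCheapestClass w x i s) (hi' : FracCol x (i', s)) : w i ≤ w i' :=
  (Prod.Lex.toLex_le_toLex'.1 (h i' hi')).1

end Fractional

section Rounding

variable {n c : ℕ} {r d : Fin n → ℝ} {L : ℝ} {𝒥 : Fin c → Set (Fin n)} {w : Fin c → ℝ}
  {x : Fin c × Finset (Fin n) → ℝ}

lemma Optimal.le_one (hw : ∀ i, 0 < w i) (hopt : Optimal r d L 𝒥 w x) (p : Fin c × Finset (Fin n)) :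
    x p ≤ 1 := by
  obtain ⟨⟨hnn, hsch, hcov⟩, hmin⟩ := hopt
  by_contra! hp
  set y := Function.update x p 1
  have hyx : ∀ q, y q ≤ x q := fun q => by
    rcases eq_or_ne q p with rfl | hq
    · simpa [y] using hp.le
    · simp [y, hq]
  have hy0 : ∀ q, 0 ≤ y q := fun q => by
    rcases eq_or_ne q p with rfl | hq
    · simp [y]
    · simpa [y, hq] using hnn q
  have hy : Feasible r d L 𝒥 y := by
    refine ⟨hy0, fun q hq => hsch q (hq.trans_le (hyx q)), fun j => ?_⟩
    by_cases hjp : j ∈ p.2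
    · calc (1 : ℝ) = if j ∈ p.2 then y p else 0 := by simp [y, hjp]
        _ ≤ _ := single_le_sum (f := fun q => if j ∈ q.2 then y q else 0)
            (fun q _ => by split_ifs; exacts [hy0 q, le_rfl]) (mem_univ p)
    · convert hcov j using 2 with q
      split_ifs with hjq
      · exact Function.update_of_ne (by rintro rfl; exact hjp hjq) _ _
      · rfl
  have hlt : cost w y < cost w x :=
    sum_lt_sum (fun q _ => mul_le_mul_of_nonneg_left (hyx q) (hw q.1).le)
      ⟨p, mem_univ p, mul_lt_mul_of_pos_left (by simpa [y] using hp) (hw p.1)⟩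
  exact (hmin y hy).not_gt hlt

noncomputable def roundSol (w : Fin c → ℝ) (x : Fin c × Finset (Fin n) → ℝ) :
    Fin c × Finset (Fin n) → ℝ := fun p =>
  if FracCol x p then (if HasPrivateJob x p.2 ∧ IsCheapestClass w x p.1 p.2 then 1 else 0)
  else x p

lemma roundSol_of_not_fracCol {p : Fin c × Finset (Fin n)} (h : ¬FracCol x p) :
    roundSol w x p = x p :=
  if_neg h

lemma roundSol_nonneg (hnn : ∀ p, 0 ≤ x p) (p : Fin c × Finset (Fin n)) : 0 ≤ roundSol w x p := by
  unfold roundSol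
  split_ifs <;> simp [hnn p]

lemma pos_of_roundSol_pos {p : Fin c × Finset (Fin n)} (h : 0 < roundSol w x p) : 0 < x p := by
  unfold roundSol at h
  split_ifs at h with hf
  exacts [hf.1, (lt_irrefl 0 h).elim, h]

lemma integral_roundSol (h0 : ∀ p, 0 ≤ x p) (h1 : ∀ p, x p ≤ 1) : Integral (roundSol w x) := by
  intro p
  unfold roundSol
  split_ifs with hf
  · exact .inr rfl
  · exact .inl rfl
  · rcases (h0 p).eq_or_lt with h | h
    · exact .inl h.symm
    · exact .inr ((h1 p).eq_of_not_lt fun h' => hf ⟨h, h'⟩)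

lemma feasible_roundSol (hfeas : Feasible r d L 𝒥 x) (hx : UniqueSuccessors x) :
    Feasible r d L 𝒥 (roundSol w x) := by
  obtain ⟨hnn, hsch, hcov⟩ := hfeas
  refine ⟨roundSol_nonneg hnn, fun p hp => hsch p (pos_of_roundSol_pos hp), fun j => ?_⟩
  by_cases hj : j ∈ Jf x
  · obtain ⟨s, hs, hpriv, hjs⟩ := hx.exists_hasPrivateJob hj
    obtain ⟨i, hi, hcheap⟩ := exists_isCheapestClass w hs
    calc (1 : ℝ) = if j ∈ (i, s).2 then roundSol w x (i, s) else 0 := by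
          simp [roundSol, hjs, hi, hpriv, hcheap]
      _ ≤ _ := single_le_sum (f := fun p => if j ∈ p.2 then roundSol w x p else 0)
          (fun p _ => by split_ifs <;> simp [roundSol_nonneg hnn]) (mem_univ _)
  · convert hcov j using 2 with p
    split_ifs with hjp
    · exact roundSol_of_not_fracCol fun hf => hj ⟨p.2, ⟨p.1, hf⟩, hjp⟩
    · rfl

lemma sum_mul_roundSol_le (hnn : ∀ p, 0 ≤ x p) (hw : ∀ i, 0 ≤ w i) (hstar : StarCond x)
    (s : Finset (Fin n)) : ∑ i, w i * roundSol w x (i, s) ≤ ∑ i, w i * x (i, s) := by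
  by_cases hs : FracSched x s ∧ HasPrivateJob x s
  · obtain ⟨hs, hpriv⟩ := hs
    obtain ⟨i₀, hi₀, hcheap⟩ := exists_isCheapestClass w hs
    rw [← sum_filter_add_sum_filter_not univ (fun i => FracCol x (i, s)),
      ← sum_filter_add_sum_filter_not univ (fun i => FracCol x (i, s)) (fun i => w i * x (i, s))]
    refine add_le_add ?_ (sum_le_sum fun i hi => by
      rw [roundSol_of_not_fracCol (mem_filter.1 hi).2])
    rw [sum_eq_single_of_mem i₀ (by simpa using hi₀)]
    · simp only [roundSol, hi₀, hpriv, hcheap, and_self, if_true, mul_one]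
      exact le_sum_mul_of_one_le_sum (hw i₀) (fun i hi => hcheap.le (mem_filter.1 hi).2)
        (fun i _ => hnn _) (hstar.one_le_sum_of_hasPrivateJob hs hpriv)
    · intro i hi hne
      have hi := (mem_filter.1 hi).2
      simp only [roundSol, hi, hpriv, true_and, if_true]
      rw [if_neg fun h => hne (h.eq hcheap hi hi₀), mul_zero]
  · refine sum_le_sum fun i _ => mul_le_mul_of_nonneg_left ?_ (hw i)
    unfold roundSol
    split_ifs with hf h
    · exact absurd ⟨⟨i, hf⟩, h.1⟩ hs
    · exact hnn _
    · rfl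

lemma cost_eq_sum_sum (w : Fin c → ℝ) (y : Fin c × Finset (Fin n) → ℝ) :
    cost w y = ∑ s, ∑ i, w i * y (i, s) := by
  rw [cost, Fintype.sum_prod_type, sum_comm]

lemma cost_roundSol_le (hnn : ∀ p, 0 ≤ x p) (hw : ∀ i, 0 ≤ w i) (hstar : StarCond x) :
    cost w (roundSol w x) ≤ cost w x := by
  simp only [cost_eq_sum_sum]
  exact sum_le_sum fun s _ => sum_mul_roundSol_le hnn hw hstar s

end Rounding

theorem same_successor_implies_integral_optimum_general {n c : ℕ} (r d : Fin n → ℝ) (L : ℝ) (𝒥 : Fin c → Set (Fin n)) (w : Fin c → ℝ)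
    (hw : ∀ i, 0 < w i)
    (x : Fin c × Finset (Fin n) → ℝ)
    (hopt : Optimal r d L 𝒥 w x) (hstar : StarCond x)
    (hsucc : ∀ j ∈ Jf x, ∀ s s' : Finset (Fin n),
      FracSched x s → FracSched x s' → j ∈ s → j ∈ s' → succIn s j = succIn s' j) :
    ∃ x' : Fin c × Finset (Fin n) → ℝ,
      Feasible r d L 𝒥 x' ∧ Integral x' ∧ cost w x' = cost w x ∧
      Optimal r d L 𝒥 w x' := by
  have hround := feasible_roundSol (w := w) hopt.1 hsucc
  have hcost : cost w (roundSol w x) = cost w x :=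
    (cost_roundSol_le hopt.1.1 (fun i => (hw i).le) hstar).antisymm (hopt.2 _ hround)
  exact ⟨roundSol w x, hround, integral_roundSol hopt.1.1 (hopt.le_one hw), hcost, hround,
    fun y hy => hcost ▸ hopt.2 y hy⟩

theorem same_successor_implies_integral_optimum {n c : ℕ} (r d : Fin n → ℝ) (L : ℝ) (𝒥 : Fin c → Set (Fin n)) (w : Fin c → ℝ)
    (hrd : ∀ j, r j ≤ d j) (hmono : ∀ j k : Fin n, j ≤ k → r j ≤ r k)
    (hL : 0 < L) (hw : ∀ i, 0 < w i)
    (x : Fin c × Finset (Fin n) → ℝ)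
    (hopt : Optimal r d L 𝒥 w x) (hstar : StarCond x)
    (hsucc : ∀ j ∈ Jf x, ∀ s s' : Finset (Fin n),
      FracSched x s → FracSched x s' → j ∈ s → j ∈ s' → succIn s j = succIn s' j) :
    ∃ x' : Fin c × Finset (Fin n) → ℝ,
      Feasible r d L 𝒥 x' ∧ Integral x' ∧ cost w x' = cost w x ∧
      Optimal r d L 𝒥 w x' :=
  same_successor_implies_integral_optimum_general r d L 𝒥 w hw x hopt hstar hsucc
end

section
/- Let x be an optimal feasible solution satisfying condition (⋆) such that every job belongs to at most one fractional schedule of x. Then for every fractional schedule s of x, the set I(s) = { i : 0 < x (i, s) < 1 } contains at least two machine classes, and w i = w i' for all i, i' ∈ I(s). -/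
open scoped Classical BigOperators

/-!
Coverage (⋆) at a job of a fractional schedule `s` counts only fractional columns through that
job, and these all have schedule `s` because `s` is the only fractional schedule containing it.
So the fractional columns on `s` carry total mass at least `1`, which a single column of value
below `1` cannot supply. For the weights, moving the whole value of `(i', s)` onto `(i, s)` keeps
every job covered (both columns cover the same jobs) and changes the cost by
`(w i - w i') * x (i', s)`; optimality therefore forbids `w i < w i'`.
-/

section Transfer

variable {n c : ℕ}

def transfer (x : Fin c × Finset (Fin n) → ℝ) (q p : Fin c × Finset (Fin n)) (ε : ℝ) :
    Fin c × Finset (Fin n) → ℝ :=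
  x - Pi.single q ε + Pi.single p ε

lemma sum_ite_mem_transfer (x : Fin c × Finset (Fin n) → ℝ) {q p : Fin c × Finset (Fin n)}
    (hqp : q.2 = p.2) (ε : ℝ) (j : Fin n) :
    (∑ p' : Fin c × Finset (Fin n), if j ∈ p'.2 then transfer x q p ε p' else 0) =
      ∑ p' : Fin c × Finset (Fin n), if j ∈ p'.2 then x p' else 0 := by
  simp only [← Finset.sum_filter, transfer, Pi.add_apply, Pi.sub_apply, Finset.sum_add_distrib,
    Finset.sum_sub_distrib, Finset.sum_pi_single', Finset.mem_filter, Finset.mem_univ, true_and, hqp]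
  ring

lemma cost_transfer (w : Fin c → ℝ) (x : Fin c × Finset (Fin n) → ℝ)
    (q p : Fin c × Finset (Fin n)) (ε : ℝ) :
    cost w (transfer x q p ε) = cost w x + (w p.1 - w q.1) * ε := by
  simp only [cost, transfer, Pi.add_apply, Pi.sub_apply, mul_add, mul_sub, Finset.sum_add_distrib,
    Finset.sum_sub_distrib, Pi.single_apply, mul_ite, mul_zero, Finset.sum_ite_eq',
    Finset.mem_univ, if_true]
  ring

variable {r d : Fin n → ℝ} {L : ℝ} {𝒥 : Fin c → Set (Fin n)} {x : Fin c × Finset (Fin n) → ℝ}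

lemma Feasible.transfer (hx : Feasible r d L 𝒥 x) {q p : Fin c × Finset (Fin n)}
    (hqp : q.2 = p.2) (hp : IsSchedule r d L 𝒥 p.1 p.2) {ε : ℝ} (hε : 0 ≤ ε) (hεq : ε ≤ x q) :
    Feasible r d L 𝒥 (_root_.transfer x q p ε) := by
  obtain ⟨hnonneg, hsched, hcover⟩ := hx
  have hsingle : ∀ a p' : Fin c × Finset (Fin n), 0 ≤ (Pi.single a ε : _ → ℝ) p' := fun a p' => by
    rw [Pi.single_apply]; exact ite_nonneg hε le_rfl
  refine ⟨fun p' => ?_, fun p' hp' => ?_, fun j => ?_⟩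
  · have := hsingle p p'
    rcases eq_or_ne p' q with rfl | hne
    · simp only [_root_.transfer, Pi.add_apply, Pi.sub_apply, Pi.single_eq_same]
      linarith
    · simp only [_root_.transfer, Pi.add_apply, Pi.sub_apply, Pi.single_eq_of_ne hne]
      linarith [hnonneg p']
  · rcases eq_or_ne p' p with rfl | hne
    · exact hp
    · refine hsched p' (lt_of_lt_of_le hp' ?_)
      have := hsingle q p'
      simp only [_root_.transfer, Pi.add_apply, Pi.sub_apply, Pi.single_eq_of_ne hne]
      linarith
  · rw [sum_ite_mem_transfer x hqp]
    exact hcover j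

end Transfer

section Fractional

variable {n c : ℕ} {r d : Fin n → ℝ} {L : ℝ} {𝒥 : Fin c → Set (Fin n)} {w : Fin c → ℝ}
  {x : Fin c × Finset (Fin n) → ℝ}

lemma Optimal.weight_le_of_pos (hopt : Optimal r d L 𝒥 w x) {i i' : Fin c} {s : Finset (Fin n)}
    (hi : IsSchedule r d L 𝒥 i s) (hi' : 0 < x (i', s)) : w i' ≤ w i := by
  by_contra! hlt
  have hfeas := hopt.1.transfer (q := (i', s)) (p := (i, s)) rfl hi hi'.le le_rfl
  have hcheaper : cost w (transfer x (i', s) (i, s) (x (i', s))) < cost w x := by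
    rw [cost_transfer]
    nlinarith
  exact (hopt.2 _ hfeas).not_gt hcheaper

lemma one_le_sum_fracCol_of_mem (hstar : StarCond x)
    (huniq : ∀ (j : Fin n) (s s' : Finset (Fin n)),
      FracSched x s → FracSched x s' → j ∈ s → j ∈ s' → s = s')
    {s : Finset (Fin n)} (hs : FracSched x s) {j : Fin n} (hj : j ∈ s) :
    1 ≤ ∑ i : Fin c, if FracCol x (i, s) then x (i, s) else 0 := by
  refine (hstar j ⟨s, hs, hj⟩).trans_eq ?_
  rw [Fintype.sum_prod_type]
  refine Finset.sum_congr rfl fun i _ => ?_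
  rw [Finset.sum_eq_single s (fun s' _ hs' => if_neg fun ⟨hfrac, hj'⟩ =>
    hs' (huniq j s' s ⟨i, hfrac⟩ hs hj' hj)) (absurd (Finset.mem_univ _))]
  simp only [hj, and_true]

end Fractional

theorem fractional_classes_two_and_equal_weights_general {n c : ℕ} (r d : Fin n → ℝ) (L : ℝ) (𝒥 : Fin c → Set (Fin n)) (w : Fin c → ℝ)
    (x : Fin c × Finset (Fin n) → ℝ)
    (hopt : Optimal r d L 𝒥 w x) (hstar : StarCond x)
    (huniq : ∀ (j : Fin n) (s s' : Finset (Fin n)),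
      FracSched x s → FracSched x s' → j ∈ s → j ∈ s' → s = s') :
    ∀ s : Finset (Fin n), FracSched x s →
      (∃ i i' : Fin c, i ≠ i' ∧ FracCol x (i, s) ∧ FracCol x (i', s)) ∧
      (∀ i i' : Fin c, FracCol x (i, s) → FracCol x (i', s) → w i = w i') := by
  intro s hs
  have hsched : ∀ i, FracCol x (i, s) → IsSchedule r d L 𝒥 i s := fun i hi => hopt.1.2.1 _ hi.1
  obtain ⟨i₀, hi₀⟩ := hs
  refine ⟨?_, fun i i' hi hi' =>
    le_antisymm (hopt.weight_le_of_pos (hsched i' hi') hi.1) (hopt.weight_le_of_pos (hsched i hi) hi'.1)⟩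
  by_contra! honly
  have hunique : ∀ i, FracCol x (i, s) → i = i₀ := fun i hi => by
    by_contra hne
    exact honly i i₀ hne hi hi₀
  obtain ⟨j, hj⟩ := (hsched i₀ hi₀).1
  have hsum := one_le_sum_fracCol_of_mem hstar huniq ⟨i₀, hi₀⟩ hj
  rw [Finset.sum_eq_single i₀ (fun i _ hne => if_neg fun hi => hne (hunique i hi))
    (absurd (Finset.mem_univ _)), if_pos hi₀] at hsum
  exact hsum.not_gt hi₀.2

theorem fractional_classes_two_and_equal_weights {n c : ℕ} (r d : Fin n → ℝ) (L : ℝ) (𝒥 : Fin c → Set (Fin n)) (w : Fin c → ℝ)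
    (hrd : ∀ j, r j ≤ d j) (hmono : ∀ j k : Fin n, j ≤ k → r j ≤ r k)
    (hL : 0 < L) (hw : ∀ i, 0 < w i)
    (x : Fin c × Finset (Fin n) → ℝ)
    (hopt : Optimal r d L 𝒥 w x) (hstar : StarCond x)
    (huniq : ∀ (j : Fin n) (s s' : Finset (Fin n)),
      FracSched x s → FracSched x s' → j ∈ s → j ∈ s' → s = s') :
    ∀ s : Finset (Fin n), FracSched x s →
      (∃ i i' : Fin c, i ≠ i' ∧ FracCol x (i, s) ∧ FracCol x (i', s)) ∧
      (∀ i i' : Fin c, FracCol x (i, s) → FracCol x (i', s) → w i = w i') :=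
  fractional_classes_two_and_equal_weights_general r d L 𝒥 w x hopt hstar huniq
end

section
/- Let x be an optimal feasible solution satisfying condition (⋆) such that every job belongs to at most one fractional schedule of x. Then for every fractional schedule s of x, the total fractional mass on s equals one: Σ_{i ∈ I(s)} x (i, s) = 1, where I(s) = { i : 0 < x (i, s) < 1 }. -/
open scoped Classical BigOperators

/- A job of a fractional schedule `s` lies in no other fractional schedule, so its
fractional coverage is exactly the fractional mass of `s`, which is therefore at least 1 by (⋆).
If the mass `T` exceeded 1, dividing every fractional column on `s` by `T` would keep every job of
`s` covered (with mass exactly 1), leave all other jobs untouched, and strictly lower the cost. -/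

section

variable {n c : ℕ}

noncomputable def fracMass (x : Fin c × Finset (Fin n) → ℝ) (s : Finset (Fin n)) : ℝ :=
  ∑ i ∈ Finset.univ.filter (fun i : Fin c => FracCol x (i, s)), x (i, s)

noncomputable def shrinkFrac (x : Fin c × Finset (Fin n) → ℝ) (s : Finset (Fin n)) :
    Fin c × Finset (Fin n) → ℝ :=
  fun p => if FracCol x p ∧ p.2 = s then x p / fracMass x s else x p

lemma FracSched.nonempty {r d : Fin n → ℝ} {L : ℝ} {𝒥 : Fin c → Set (Fin n)}
    {x : Fin c × Finset (Fin n) → ℝ} {s : Finset (Fin n)}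
    (hx : Feasible r d L 𝒥 x) (hs : FracSched x s) : s.Nonempty := by
  obtain ⟨i, hi⟩ := hs
  exact (hx.2.1 (i, s) hi.1).1

lemma sum_fracCol_mem_eq_fracMass {x : Fin c × Finset (Fin n) → ℝ} {s : Finset (Fin n)}
    {k : Fin n} (hk : k ∈ s) (huniq : ∀ t, FracSched x t → k ∈ t → t = s) :
    (∑ p : Fin c × Finset (Fin n), if FracCol x p ∧ k ∈ p.2 then x p else 0) =
      fracMass x s := by
  rw [fracMass, Finset.sum_filter, Fintype.sum_prod_type]
  refine Finset.sum_congr rfl fun i _ => ?_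
  rw [Finset.sum_eq_single s]
  · simp only [hk, and_true]
  · intro t _ hts
    exact if_neg fun ⟨hfrac, hkt⟩ => hts (huniq t ⟨i, hfrac⟩ hkt)
  · simp

lemma one_le_fracMass {x : Fin c × Finset (Fin n) → ℝ} {s : Finset (Fin n)} {k : Fin n}
    (hstar : StarCond x) (hs : FracSched x s) (hk : k ∈ s)
    (huniq : ∀ t, FracSched x t → k ∈ t → t = s) : 1 ≤ fracMass x s := by
  rw [← sum_fracCol_mem_eq_fracMass hk huniq]
  exact hstar k ⟨s, hs, hk⟩

lemma sum_column_le_coverage {y : Fin c × Finset (Fin n) → ℝ} (hy : ∀ p, 0 ≤ y p)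
    {s : Finset (Fin n)} {k : Fin n} (hk : k ∈ s) :
    ∑ i, y (i, s) ≤ ∑ p : Fin c × Finset (Fin n), if k ∈ p.2 then y p else 0 := by
  rw [Fintype.sum_prod_type]
  refine Finset.sum_le_sum fun i _ => ?_
  simpa only [hk, if_true] using
    Finset.single_le_sum (f := fun t => if k ∈ t then y (i, t) else 0)
      (fun t _ => by split_ifs <;> simp [hy]) (Finset.mem_univ s)

section shrinkFrac

variable {x : Fin c × Finset (Fin n) → ℝ} {s : Finset (Fin n)}

lemma shrinkFrac_le (hx : ∀ p, 0 ≤ x p) (hT : 1 ≤ fracMass x s)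
    (p : Fin c × Finset (Fin n)) :
    shrinkFrac x s p ≤ x p := by
  unfold shrinkFrac
  split_ifs
  · exact div_le_self (hx p) hT
  · exact le_rfl

lemma feasible_shrinkFrac {r d : Fin n → ℝ} {L : ℝ} {𝒥 : Fin c → Set (Fin n)}
    (hx : Feasible r d L 𝒥 x) (hT : 0 < fracMass x s) :
    Feasible r d L 𝒥 (shrinkFrac x s) := by
  obtain ⟨hnonneg, hsched, hcover⟩ := hx
  have hpos_iff : ∀ p, 0 < shrinkFrac x s p ↔ 0 < x p := fun p => by
    unfold shrinkFrac
    split_ifs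
    · exact div_pos_iff_of_pos_right hT
    · rfl
  have hy : ∀ p, 0 ≤ shrinkFrac x s p := fun p => by
    unfold shrinkFrac
    split_ifs
    · exact div_nonneg (hnonneg p) hT.le
    · exact hnonneg p
  refine ⟨hy, fun p hp => hsched p ((hpos_iff p).1 hp), fun k => ?_⟩
  by_cases hk : k ∈ s
  · calc (1 : ℝ) = ∑ i, if FracCol x (i, s) then x (i, s) / fracMass x s else 0 := by
          rw [← Finset.sum_filter, ← Finset.sum_div, ← fracMass, div_self hT.ne']
      _ ≤ ∑ i, shrinkFrac x s (i, s) := by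
          refine Finset.sum_le_sum fun i _ => ?_
          unfold shrinkFrac
          split_ifs <;> simp_all
      _ ≤ _ := sum_column_le_coverage hy hk
  · -- columns containing `k` are not on `s`, hence unchanged
    convert hcover k using 2 with p
    unfold shrinkFrac
    split_ifs with hkp hfs <;> first | rfl | exact absurd (hfs.2 ▸ hkp) hk

lemma cost_shrinkFrac_lt {w : Fin c → ℝ} (hw : ∀ i, 0 < w i) (hx : ∀ p, 0 ≤ x p)
    (hs : FracSched x s) (hT : 1 < fracMass x s) : cost w (shrinkFrac x s) < cost w x := by
  obtain ⟨i, hi⟩ := hs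
  refine Finset.sum_lt_sum (fun p _ => mul_le_mul_of_nonneg_left (shrinkFrac_le hx hT.le p)
    (hw p.1).le) ⟨(i, s), Finset.mem_univ _, ?_⟩
  have hshrink : shrinkFrac x s (i, s) = x (i, s) / fracMass x s := if_pos ⟨hi, rfl⟩
  rw [hshrink]
  exact mul_lt_mul_of_pos_left (div_lt_self hi.1 hT) (hw i)

end shrinkFrac

end

theorem fractional_mass_eq_one_general {n c : ℕ} (r d : Fin n → ℝ) (L : ℝ) (𝒥 : Fin c → Set (Fin n)) (w : Fin c → ℝ)
    (hw : ∀ i, 0 < w i)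
    (x : Fin c × Finset (Fin n) → ℝ)
    (hopt : Optimal r d L 𝒥 w x) (hstar : StarCond x)
    (huniq : ∀ (j : Fin n) (s s' : Finset (Fin n)),
      FracSched x s → FracSched x s' → j ∈ s → j ∈ s' → s = s') :
    ∀ s : Finset (Fin n), FracSched x s →
      ∑ i ∈ Finset.univ.filter (fun i : Fin c => FracCol x (i, s)), x (i, s) = 1 := by
  intro s hs
  obtain ⟨k, hk⟩ := hs.nonempty hopt.1
  have hge : 1 ≤ fracMass x s :=
    one_le_fracMass hstar hs hk fun t ht hkt => huniq k t s ht hs hkt hk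
  refine le_antisymm (not_lt.1 fun hgt => ?_) hge
  exact (cost_shrinkFrac_lt hw hopt.1.1 hs hgt).not_ge
    (hopt.2 _ (feasible_shrinkFrac hopt.1 (one_pos.trans_le hge)))

theorem fractional_mass_eq_one {n c : ℕ} (r d : Fin n → ℝ) (L : ℝ) (𝒥 : Fin c → Set (Fin n)) (w : Fin c → ℝ)
    (hrd : ∀ j, r j ≤ d j) (hmono : ∀ j k : Fin n, j ≤ k → r j ≤ r k)
    (hL : 0 < L) (hw : ∀ i, 0 < w i)
    (x : Fin c × Finset (Fin n) → ℝ)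
    (hopt : Optimal r d L 𝒥 w x) (hstar : StarCond x)
    (huniq : ∀ (j : Fin n) (s s' : Finset (Fin n)),
      FracSched x s → FracSched x s' → j ∈ s → j ∈ s' → s = s') :
    ∀ s : Finset (Fin n), FracSched x s →
      ∑ i ∈ Finset.univ.filter (fun i : Fin c => FracCol x (i, s)), x (i, s) = 1 :=
  fractional_mass_eq_one_general r d L 𝒥 w hw x hopt hstar huniq
end

section
/- Let x be a feasible solution, j a job, and (i₀, s₀) a column with j ∈ s₀ and x (i₀, s₀) ≥ 1. Then there exists a feasible solution x' with cost(x') ≤ cost(x) such that j belongs to no fractional schedule of x' (i.e., j ∉ 𝒥_f(x')); in particular, if x is optimal then x' is optimal. Such an x' can be obtained from x by moving, for each fractional column (i, s) with j ∈ s, the value x (i, s) onto the column (i, s \ {j}) (dropping it when s = {j}). -/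
/-! Moving the value of every fractional column `(i, s)` with `j ∈ s` onto `(i, s.erase j)`
leaves every job `k ≠ j` covered exactly as before, as `k ∈ s ↔ k ∈ s.erase j`; the column
`(i₀, s₀)` is not fractional, so it stays and still covers `j`. Subsets of schedules are
schedules, and the cost can only drop, the only loss being the values discarded from columns
`(i, {j})`. The coverage and cost sums of the new solution are both computed by one change
of variables `t ↦ insert j t` between the sets avoiding `j` and those containing it. -/

open scoped Classical BigOperators

/-- The solution obtained from `x` by moving, for each fractional column `(i, s)` with
`j ∈ s`, the value `x (i, s)` onto the column `(i, s \\ {j})`, dropping it when `s = {j}`. -/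
noncomputable def moveOff {n c : ℕ} (x : Fin c × Finset (Fin n) → ℝ) (j : Fin n) :
    Fin c × Finset (Fin n) → ℝ := fun p =>
  if j ∈ p.2 then (if FracCol x p then 0 else x p)
  else x p +
    (if p.2.Nonempty ∧ FracCol x (p.1, insert j p.2) then x (p.1, insert j p.2) else 0)

open Finset

theorem Finset.sum_ite_notMem_insert_eq_sum_ite_mem_erase {α M : Type*} [Fintype α]
    [DecidableEq α] [AddCommMonoid M] (a : α) (h : Finset α → Finset α → M) :
    ∑ s, (if a ∉ s then h s (insert a s) else 0) =
      ∑ s, (if a ∈ s then h (s.erase a) s else 0) := by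
  rw [← sum_filter, ← sum_filter]
  refine sum_nbij' (insert a) (·.erase a) ?_ ?_ ?_ ?_ ?_ <;>
    intro s hs <;> simp_all [insert_erase]

theorem Compatible.mono {n : ℕ} {r d : Fin n → ℝ} {L : ℝ} {s t : Finset (Fin n)}
    (h : Compatible r d L t) (hst : s ⊆ t) : Compatible r d L s :=
  fun j hj k hk hjk => h j (hst hj) k (hst hk) hjk

theorem IsSchedule.mono {n c : ℕ} {r d : Fin n → ℝ} {L : ℝ} {𝒥 : Fin c → Set (Fin n)}
    {i : Fin c} {s t : Finset (Fin n)} (h : IsSchedule r d L 𝒥 i t) (hst : s ⊆ t)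
    (hs : s.Nonempty) : IsSchedule r d L 𝒥 i s :=
  ⟨hs, h.2.1.mono hst, fun k hk => h.2.2 k (hst hk)⟩

theorem Optimal.of_cost_le {n c : ℕ} {r d : Fin n → ℝ} {L : ℝ} {𝒥 : Fin c → Set (Fin n)}
    {w : Fin c → ℝ} {x y : Fin c × Finset (Fin n) → ℝ} (hx : Optimal r d L 𝒥 w x)
    (hy : Feasible r d L 𝒥 y) (hcost : cost w y ≤ cost w x) : Optimal r d L 𝒥 w y :=
  ⟨hy, fun z hz => hcost.trans (hx.2 z hz)⟩

section moveOff

variable {n c : ℕ} (x : Fin c × Finset (Fin n) → ℝ) (j : Fin n)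

theorem moveOff_apply_of_mem_of_not_fracCol {p : Fin c × Finset (Fin n)} (hj : j ∈ p.2)
    (hp : ¬ FracCol x p) : moveOff x j p = x p := by
  simp [moveOff, hj, hp]

theorem notMem_Jf_moveOff : j ∉ Jf (moveOff x j) := by
  rintro ⟨s, ⟨i, hfrac⟩, hjs⟩
  by_cases hp : FracCol x (i, s)
  · have hzero : moveOff x j (i, s) = 0 := by simp [moveOff, hjs, hp]
    simp [FracCol, hzero] at hfrac
  · rw [FracCol, moveOff_apply_of_mem_of_not_fracCol x j hjs hp] at hfrac
    exact hp hfrac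

theorem moveOff_nonneg (hx : ∀ p, 0 ≤ x p) (p : Fin c × Finset (Fin n)) :
    0 ≤ moveOff x j p := by
  unfold moveOff
  split_ifs <;> simp_all [add_nonneg]

theorem pos_or_pos_insert_of_moveOff_pos {p : Fin c × Finset (Fin n)}
    (hp : 0 < moveOff x j p) : 0 < x p ∨ (p.2.Nonempty ∧ 0 < x (p.1, insert j p.2)) := by
  unfold moveOff at hp
  split_ifs at hp with _ _ hin
  · exact (lt_irrefl 0 hp).elim
  · exact .inl hp
  · exact .inr ⟨hin.1, hin.2.1⟩
  · exact .inl (by simpa using hp)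

theorem sum_mul_moveOff (f : Fin c × Finset (Fin n) → ℝ) :
    ∑ p, f p * moveOff x j p =
      ∑ p, (if j ∈ p.2 ∧ FracCol x p then
          (if (p.2.erase j).Nonempty then f (p.1, p.2.erase j) else 0) else f p) * x p := by
  have inflow :
      ∑ p : Fin c × Finset (Fin n), (if j ∉ p.2 then f p *
          (if p.2.Nonempty ∧ FracCol x (p.1, insert j p.2) then x (p.1, insert j p.2) else 0)
        else 0) =
      ∑ p : Fin c × Finset (Fin n), (if j ∈ p.2 then f (p.1, p.2.erase j) *
          (if (p.2.erase j).Nonempty ∧ FracCol x p then x p else 0) else 0) := by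
    simp only [Fintype.sum_prod_type]
    refine sum_congr rfl fun i _ => ?_
    exact sum_ite_notMem_insert_eq_sum_ite_mem_erase j fun s t =>
      f (i, s) * (if s.Nonempty ∧ FracCol x (i, t) then x (i, t) else 0)
  calc ∑ p, f p * moveOff x j p
      = ∑ p, ((if j ∈ p.2 ∧ FracCol x p then 0 else f p * x p) +
          if j ∉ p.2 then f p *
            (if p.2.Nonempty ∧ FracCol x (p.1, insert j p.2) then x (p.1, insert j p.2) else 0)
          else 0) := by
        refine sum_congr rfl fun p _ => ?_
        unfold moveOff
        split_ifs <;> simp_all [mul_add]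
    _ = ∑ p, ((if j ∈ p.2 ∧ FracCol x p then 0 else f p * x p) +
          if j ∈ p.2 then f (p.1, p.2.erase j) *
            (if (p.2.erase j).Nonempty ∧ FracCol x p then x p else 0) else 0) := by
        rw [sum_add_distrib, sum_add_distrib, inflow]
    _ = _ := by
        refine sum_congr rfl fun p _ => ?_
        split_ifs <;> simp_all

theorem cost_moveOff_le {w : Fin c → ℝ} (hw : ∀ i, 0 ≤ w i) (hx : ∀ p, 0 ≤ x p) :
    cost w (moveOff x j) ≤ cost w x := by
  unfold cost
  rw [sum_mul_moveOff]
  refine sum_le_sum fun p _ => mul_le_mul_of_nonneg_right ?_ (hx p)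
  split_ifs <;> simp [hw]

theorem sum_ite_mem_moveOff_of_ne {k : Fin n} (hk : k ≠ j) :
    ∑ p, (if k ∈ p.2 then moveOff x j p else 0) = ∑ p, if k ∈ p.2 then x p else 0 := by
  have as_weighted (y : Fin c × Finset (Fin n) → ℝ) : ∑ p, (if k ∈ p.2 then y p else 0) =
      ∑ p, (if k ∈ p.2 then 1 else 0) * y p :=
    sum_congr rfl fun p _ => (boole_mul _ _).symm
  rw [as_weighted, as_weighted, sum_mul_moveOff]
  refine sum_congr rfl fun p _ => ?_
  have hk_erase : k ∈ p.2.erase j ↔ k ∈ p.2 := by simp [mem_erase, hk]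
  by_cases hmove : j ∈ p.2 ∧ FracCol x p
  · by_cases hne : (p.2.erase j).Nonempty
    · simp only [if_pos hmove, if_pos hne, hk_erase]
    · have hkp : k ∉ p.2 := fun hkp => hne ⟨k, hk_erase.2 hkp⟩
      simp [hmove, hne, hkp]
  · rw [if_neg hmove]

theorem Feasible.moveOff {r d : Fin n → ℝ} {L : ℝ} {𝒥 : Fin c → Set (Fin n)}
    (hx : Feasible r d L 𝒥 x) {i₀ : Fin c} {s₀ : Finset (Fin n)} (hj : j ∈ s₀)
    (hx₀ : 1 ≤ x (i₀, s₀)) : Feasible r d L 𝒥 (moveOff x j) := by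
  obtain ⟨hnonneg, hsched, hcover⟩ := hx
  refine ⟨moveOff_nonneg x j hnonneg, fun p hp => ?_, fun k => ?_⟩
  · rcases pos_or_pos_insert_of_moveOff_pos x j hp with hpos | ⟨hne, hpos⟩
    · exact hsched p hpos
    · exact (hsched _ hpos).mono (subset_insert j p.2) hne
  · obtain rfl | hk := eq_or_ne k j
    · have hstays : moveOff x k (i₀, s₀) = x (i₀, s₀) :=
        moveOff_apply_of_mem_of_not_fracCol x k hj fun h => h.2.not_ge hx₀
      calc (1 : ℝ) ≤ if k ∈ s₀ then moveOff x k (i₀, s₀) else 0 := by rwa [if_pos hj, hstays]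
        _ ≤ _ := single_le_sum (f := fun p => if k ∈ p.2 then moveOff x k p else 0)
            (fun p _ => by split_ifs <;> simp [moveOff_nonneg x k hnonneg]) (mem_univ (i₀, s₀))
    · rw [sum_ite_mem_moveOff_of_ne x j hk]
      exact hcover k

end moveOff

theorem moveOff_removes_job_from_fractional_general {n c : ℕ} (r d : Fin n → ℝ) (L : ℝ) (𝒥 : Fin c → Set (Fin n)) (w : Fin c → ℝ)
    (hw : ∀ i, 0 < w i)
    (x : Fin c × Finset (Fin n) → ℝ)
    (hfeas : Feasible r d L 𝒥 x)
    (j : Fin n) (i₀ : Fin c) (s₀ : Finset (Fin n))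
    (hj : j ∈ s₀) (hx₀ : 1 ≤ x (i₀, s₀)) :
    Feasible r d L 𝒥 (moveOff x j) ∧
    cost w (moveOff x j) ≤ cost w x ∧
    j ∉ Jf (moveOff x j) ∧
    (Optimal r d L 𝒥 w x → Optimal r d L 𝒥 w (moveOff x j)) := by
  have hfeas' := hfeas.moveOff x j hj hx₀
  have hcost := cost_moveOff_le x j (fun i => (hw i).le) hfeas.1
  exact ⟨hfeas', hcost, notMem_Jf_moveOff x j, fun hopt => hopt.of_cost_le hfeas' hcost⟩

theorem moveOff_removes_job_from_fractional {n c : ℕ} (r d : Fin n → ℝ) (L : ℝ) (𝒥 : Fin c → Set (Fin n)) (w : Fin c → ℝ)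
    (hrd : ∀ j, r j ≤ d j) (hmono : ∀ j k : Fin n, j ≤ k → r j ≤ r k)
    (hL : 0 < L) (hw : ∀ i, 0 < w i)
    (x : Fin c × Finset (Fin n) → ℝ)
    (hfeas : Feasible r d L 𝒥 x)
    (j : Fin n) (i₀ : Fin c) (s₀ : Finset (Fin n))
    (hj : j ∈ s₀) (hx₀ : 1 ≤ x (i₀, s₀)) :
    Feasible r d L 𝒥 (moveOff x j) ∧
    cost w (moveOff x j) ≤ cost w x ∧
    j ∉ Jf (moveOff x j) ∧
    (Optimal r d L 𝒥 w x → Optimal r d L 𝒥 w (moveOff x j)) :=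
  moveOff_removes_job_from_fractional_general r d L 𝒥 w hw x hfeas j i₀ s₀ hj hx₀
end

section
/- Let s be a finset of jobs with at least two elements. Then s is pairwise compatible if and only if both of the following hold: (i) for every j ∈ s having an immediate successor k in s, d j ≤ r k; and (ii) d (max s) − r (min s) ≤ L. -/
open scoped Classical BigOperators

/-
Compatibility of a set of jobs only has to be checked on consecutive pairs and on its extreme
pair: since start times are nondecreasing, `d j ≤ r k'` for the successor `k'` of `j` propagates
to `d j ≤ r k` for every later `k`, and then `d k ≤ d (max s)` and `r (min s) ≤ r j` bound every
spread `d k - r j` by the spread of the whole set.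
-/

namespace Compatible

variable {n : ℕ} {r d : Fin n → ℝ} {L : ℝ} {s : Finset (Fin n)}

theorem mem_and_lt_of_succIn_eq {j k : Fin n} (h : succIn s j = k) : k ∈ s ∧ j < k := by
  simpa only [Finset.mem_filter] using Finset.mem_of_min h

theorem exists_succIn_eq_le {j k : Fin n} (hk : k ∈ s) (hjk : j < k) :
    ∃ k' : Fin n, succIn s j = k' ∧ k' ≤ k := by
  have hk' : k ∈ s.filter (j < ·) := Finset.mem_filter.2 ⟨hk, hjk⟩
  exact ⟨_, (Finset.coe_min' ⟨k, hk'⟩).symm, Finset.min'_le _ _ hk'⟩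

theorem successors (hc : Compatible r d L s) :
    ∀ j ∈ s, ∀ k : Fin n, succIn s j = k → d j ≤ r k := fun j hj k hk =>
  (hc j hj k (mem_and_lt_of_succIn_eq hk).1 (mem_and_lt_of_succIn_eq hk).2).1

theorem window (hc : Compatible r d L s) (hs : s.Nonempty) (hcard : 2 ≤ s.card) :
    d (s.max' hs) - r (s.min' hs) ≤ L :=
  (hc _ (s.min'_mem hs) _ (s.max'_mem hs) (s.min'_lt_max'_of_card hcard)).2

section OfSuccessors

variable (hmono : Monotone r) (hsucc : ∀ j ∈ s, ∀ k : Fin n, succIn s j = k → d j ≤ r k)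
include hmono hsucc

theorem le_of_successors {j k : Fin n} (hj : j ∈ s) (hk : k ∈ s) (hjk : j < k) : d j ≤ r k := by
  obtain ⟨k', hsucc_eq, hk'k⟩ := exists_succIn_eq_le hk hjk
  exact (hsucc j hj k' hsucc_eq).trans (hmono hk'k)

theorem le_d_max'_of_successors (hrd : ∀ j, r j ≤ d j) (hs : s.Nonempty) {k : Fin n}
    (hk : k ∈ s) : d k ≤ d (s.max' hs) := by
  rcases (s.le_max' k hk).eq_or_lt with h | h
  · rw [← h]
  · exact (le_of_successors hmono hsucc hk (s.max'_mem hs) h).trans (hrd _)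

theorem of_successors_of_window (hrd : ∀ j, r j ≤ d j) (hs : s.Nonempty)
    (hwindow : d (s.max' hs) - r (s.min' hs) ≤ L) : Compatible r d L s := by
  intro j hj k hk hjk
  refine ⟨le_of_successors hmono hsucc hj hk hjk, ?_⟩
  have hdk := le_d_max'_of_successors hmono hsucc hrd hs hk
  have hrj : r (s.min' hs) ≤ r j := hmono (s.min'_le j hj)
  linarith

end OfSuccessors

end Compatible

theorem compatible_iff_successors_and_window_general {n : ℕ} (r d : Fin n → ℝ) (L : ℝ)
    (hrd : ∀ j, r j ≤ d j) (hmono : ∀ j k : Fin n, j ≤ k → r j ≤ r k)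
    (s : Finset (Fin n)) (hs : s.Nonempty) (hcard : 2 ≤ s.card) :
    Compatible r d L s ↔
      ((∀ j ∈ s, ∀ k : Fin n, succIn s j = (k : WithTop (Fin n)) → d j ≤ r k) ∧
        d (s.max' hs) - r (s.min' hs) ≤ L) :=
  ⟨fun hc => ⟨hc.successors, hc.window hs hcard⟩,
    fun ⟨hsucc, hwindow⟩ => .of_successors_of_window hmono hsucc hrd hs hwindow⟩

theorem compatible_iff_successors_and_window {n : ℕ} (r d : Fin n → ℝ) (L : ℝ)
    (hrd : ∀ j, r j ≤ d j) (hmono : ∀ j k : Fin n, j ≤ k → r j ≤ r k)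
    (hL : 0 < L)
    (s : Finset (Fin n)) (hs : s.Nonempty) (hcard : 2 ≤ s.card) :
    Compatible r d L s ↔
      ((∀ j ∈ s, ∀ k : Fin n, succIn s j = (k : WithTop (Fin n)) → d j ≤ r k) ∧
        d (s.max' hs) - r (s.min' hs) ≤ L) :=
  compatible_iff_successors_and_window_general r d L hrd hmono s hs hcard
end
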